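/- arXiv:1007.1841 — 9 statements merged into one kernel-verified Lean document; each statement's English description precedes it below -/
import Mathlib

section
/- In any finite tree there exists a vertex such that after removing this vertex, every connected component of the remaining graph contains at most half of the leaves of the original tree. -/
/-!
Call a branch of the tree at `v` (a component of `G - v`) heavy if it holds more than half of
the leaves; disjoint branches cannot both be heavy. If every vertex had a heavy branch, take a
heavy branch `B` at `v` that is minimal under inclusion, and let `u ∈ B` be the neighbour of `v`.
The branch at `u` containing `v` is disjoint from `B`, hence light, so a heavy branch at `u`
misses `v` and is therefore contained in `B \ {u}`, contradicting minimality.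
-/

/-- The graph obtained from `G` by deleting the vertex `v` (and its incident edges). -/
def SimpleGraph.deleteVert {V : Type*} (G : SimpleGraph V) (v : V) : SimpleGraph V where
  Adj a b := G.Adj a b ∧ a ≠ v ∧ b ≠ v
  symm := by constructor; intro a b h; exact ⟨h.1.symm, h.2.2, h.2.1⟩
  loopless := by constructor; intro a h; exact h.1.ne rfl

lemma Set.ncard_inter_add_ncard_inter_le {α : Type*} {A B L : Set α} (hAB : Disjoint A B)
    (hL : L.Finite) : (A ∩ L).ncard + (B ∩ L).ncard ≤ L.ncard := by
  rw [← Set.ncard_union_eq (hAB.mono Set.inter_subset_left Set.inter_subset_left)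
    (hL.subset Set.inter_subset_right) (hL.subset Set.inter_subset_right)]
  exact Set.ncard_le_ncard (Set.union_subset Set.inter_subset_right Set.inter_subset_right) hL

namespace SimpleGraph

variable {V : Type*} {G : SimpleGraph V}

/-- The component of `w` in `G - v`; it is `{v}` when `w = v`. -/
def branch (G : SimpleGraph V) (v w : V) : Set V :=
  {x | (G.deleteVert v).Reachable w x}

lemma self_mem_branch (v w : V) : w ∈ G.branch v w := Reachable.refl w

lemma branch_eq_of_mem {v w x : V} (hx : x ∈ G.branch v w) : G.branch v x = G.branch v w :=
  Set.ext fun _ => ⟨hx.trans, hx.symm.trans⟩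

lemma eq_of_mem_branch_self {v w : V} (hv : v ∈ G.branch v w) : w = v := by
  obtain ⟨p⟩ := hv.symm
  cases p with
  | nil => rfl
  | cons h _ => exact absurd rfl h.2.1

lemma Walk.mem_branch_of_notMem_support {v a b : V} (p : G.Walk a b) (hv : v ∉ p.support) :
    b ∈ G.branch v a := by
  induction p with
  | nil => exact Reachable.refl _
  | @cons a c b h p ih =>
    simp only [Walk.support_cons, List.mem_cons, not_or] at hv
    have hadj : (G.deleteVert v).Adj a c :=
      ⟨h, Ne.symm hv.1, fun hc => hv.2 (hc ▸ p.start_mem_support)⟩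
    exact hadj.reachable.trans (ih hv.2)

lemma exists_path_notMem_support_of_mem_branch {v a b : V} (ha : a ≠ v)
    (hb : b ∈ G.branch v a) : ∃ p : G.Path a b, v ∉ p.1.support := by
  classical
  suffices ∃ p : G.Walk a b, v ∉ p.support by
    obtain ⟨p, hp⟩ := this
    exact ⟨p.toPath, fun h => hp (p.support_toPath_subset_support h)⟩
  obtain ⟨p⟩ := hb
  induction p with
  | nil => exact ⟨Walk.nil, by simp [Ne.symm ha]⟩
  | @cons a c b h p ih =>
    obtain ⟨q, hq⟩ := ih h.2.2
    exact ⟨Walk.cons h.1 q, by simp [hq, Ne.symm h.2.1]⟩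

namespace IsTree

variable (hT : G.IsTree)
include hT

lemma exists_adj_mem_branch {v w : V} (hw : w ≠ v) : ∃ u, G.Adj v u ∧ u ∈ G.branch v w := by
  obtain ⟨p, hp⟩ := hT.connected.preconnected.exists_isPath v w
  cases p with
  | nil => exact absurd rfl hw
  | @cons _ u _ h q =>
    rw [Walk.cons_isPath_iff] at hp
    exact ⟨u, h, branch_eq_of_mem (q.mem_branch_of_notMem_support hp.2) ▸ self_mem_branch v u⟩

lemma mem_branch_iff_notMem_branch {v u x : V} (hadj : G.Adj v u) :
    x ∈ G.branch u v ↔ x ∉ G.branch v u := by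
  classical
  constructor
  · intro hxv hxu
    obtain ⟨p, hp⟩ := exists_path_notMem_support_of_mem_branch hadj.ne hxv
    obtain ⟨q, hq⟩ := exists_path_notMem_support_of_mem_branch hadj.ne' hxu
    have hvuq : (Walk.cons hadj q.1).IsPath := (Walk.cons_isPath_iff _ _).2 ⟨q.2, hq⟩
    apply hp
    have := hT.isAcyclic.subsingleton_path v x
    rw [Subsingleton.elim p ⟨_, hvuq⟩]
    simp
  · intro hxu
    obtain ⟨p, hp⟩ := hT.connected.preconnected.exists_isPath u x
    by_contra hxv
    by_cases hv : v ∈ p.support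
    · -- past `v`, the path from `u` never returns to `u`
      have hnodup := hp.support_nodup
      rw [← p.take_spec hv, Walk.support_append] at hnodup
      have hu : u ∉ (p.dropUntil v hv).support.tail :=
        List.disjoint_of_nodup_append hnodup (p.takeUntil v hv).start_mem_support
      refine hxv ((p.dropUntil v hv).mem_branch_of_notMem_support ?_)
      rw [← Walk.cons_tail_support, List.mem_cons, not_or]
      exact ⟨hadj.ne', hu⟩
    · exact hxu (p.mem_branch_of_notMem_support hv)

lemma exists_forall_branch_ssubset {L : Set V} (hL : L.Finite) {v w : V} (hw : w ≠ v)
    (hheavy : L.ncard < 2 * (G.branch v w ∩ L).ncard) :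
    ∃ u, ∀ w', w' ≠ u → L.ncard < 2 * (G.branch u w' ∩ L).ncard →
      G.branch u w' ⊂ G.branch v w := by
  obtain ⟨u, hadj, hu⟩ := hT.exists_adj_mem_branch hw
  rw [← branch_eq_of_mem hu] at hheavy ⊢
  have hsep (x : V) := hT.mem_branch_iff_notMem_branch (x := x) hadj
  refine ⟨u, fun w' hw' hheavy' => ⟨fun x hx => ?_, fun hsub => hw' ?_⟩⟩
  · have hv : v ∉ G.branch u w' := fun hv => by
      have := Set.ncard_inter_add_ncard_inter_le
        (Set.disjoint_left.2 fun y => (hsep y).1) hL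
      rw [← branch_eq_of_mem hv] at hheavy'
      omega
    by_contra hxu
    exact hv (hx.trans ((hsep x).2 hxu).symm)
  · exact eq_of_mem_branch_self (hsub (self_mem_branch v u))

theorem exists_forall_two_mul_ncard_branch_inter_le [Finite V] (L : Set V) :
    ∃ v, ∀ w, w ≠ v → 2 * (G.branch v w ∩ L).ncard ≤ L.ncard := by
  by_contra! h
  obtain ⟨⟨v, w⟩, ⟨hw, hheavy⟩, hmin⟩ := exists_minimalFor_of_wellFoundedLT
    (fun p : V × V => p.2 ≠ p.1 ∧ L.ncard < 2 * (G.branch p.1 p.2 ∩ L).ncard)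
    (fun p => G.branch p.1 p.2)
    (by obtain ⟨v⟩ := hT.connected.nonempty; obtain ⟨w, hw, hh⟩ := h v; exact ⟨(v, w), hw, hh⟩)
  obtain ⟨u, hu⟩ := hT.exists_forall_branch_ssubset L.toFinite hw hheavy
  obtain ⟨w', hw', hheavy'⟩ := h u
  have hss := hu w' hw' hheavy'
  exact hss.not_subset (hmin (j := (u, w')) ⟨hw', hheavy'⟩ hss.subset)

end IsTree

end SimpleGraph

theorem exists_vertex_halving_leaves_general {V : Type*} [Fintype V]
    (G : SimpleGraph V) [DecidableRel G.Adj] (hT : G.IsTree) :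
    ∃ v : V, ∀ w : V, w ≠ v →
      2 * {u : V | (G.deleteVert v).Reachable w u ∧ G.degree u = 1}.ncard ≤
        {u : V | G.degree u = 1}.ncard :=
  hT.exists_forall_two_mul_ncard_branch_inter_le {u | G.degree u = 1}

/-- In any finite tree there is a vertex whose removal leaves every connected
component with at most half of the leaves (degree-one vertices) of the original tree. -/
theorem exists_vertex_halving_leaves {V : Type*} [Fintype V] [DecidableEq V]
    (G : SimpleGraph V) [DecidableRel G.Adj] (hT : G.IsTree) :
    ∃ v : V, ∀ w : V, w ≠ v →
      2 * {u : V | (G.deleteVert v).Reachable w u ∧ G.degree u = 1}.ncard ≤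
        {u : V | G.degree u = 1}.ncard :=
  exists_vertex_halving_leaves_general G hT
end

section
/- For any Boolean function f, log₂ Cᴾ(f) ≤ D(f) ≤ 3 log₂ Cᴾ(f), where Cᴾ(f) is the minimal number of leaves of a protocol tree computing f and D(f) is the minimal depth. -/
/-- A two-party protocol tree: internal nodes are owned by Alice (`nodeA`,
labeled by a function of her input) or Bob (`nodeB`), leaves carry output bits. -/
inductive PTree (X Y : Type) : Type
  | leaf : Bool → PTree X Y
  | nodeA : (X → Bool) → PTree X Y → PTree X Y → PTree X Y
  | nodeB : (Y → Bool) → PTree X Y → PTree X Y → PTree X Y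

namespace PTree
variable {X Y : Type}

/-- The output of the protocol on input pair `(x, y)`. -/
def eval : PTree X Y → X → Y → Bool
  | leaf b, _, _ => b
  | nodeA g l r, x, y => if g x then eval r x y else eval l x y
  | nodeB g l r, x, y => if g y then eval r x y else eval l x y

/-- Depth of the protocol tree (worst-case number of bits communicated). -/
def depth : PTree X Y → ℕ
  | leaf _ => 0
  | nodeA _ l r => max (depth l) (depth r) + 1
  | nodeB _ l r => max (depth l) (depth r) + 1

/-- Total number of leaves. -/
def leaves : PTree X Y → ℕ
  | leaf _ => 1
  | nodeA _ l r => leaves l + leaves r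
  | nodeB _ l r => leaves l + leaves r

/-- Number of leaves labeled `c`. -/
def leavesLabeled (c : Bool) : PTree X Y → ℕ
  | leaf b => if b = c then 1 else 0
  | nodeA _ l r => leavesLabeled c l + leavesLabeled c r
  | nodeB _ l r => leavesLabeled c l + leavesLabeled c r

/-- The protocol tree computes `f`. -/
def Computes (T : PTree X Y) (f : X → Y → Bool) : Prop :=
  ∀ x y, T.eval x y = f x y

end PTree

/-- Deterministic communication complexity: minimal depth of a protocol tree computing `f`. -/
noncomputable def Dcc {X Y : Type} (f : X → Y → Bool) : ℕ :=
  sInf {d | ∃ T : PTree X Y, T.Computes f ∧ T.depth = d}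

/-- Protocol partition number: minimal number of leaves of a protocol tree computing `f`. -/
noncomputable def CP {X Y : Type} (f : X → Y → Bool) : ℕ :=
  sInf {c | ∃ T : PTree X Y, T.Computes f ∧ T.leaves = c}

/-- Minimal number of `1`-leaves of a protocol tree computing `f`. -/
noncomputable def C1P {X Y : Type} (f : X → Y → Bool) : ℕ :=
  sInf {c | ∃ T : PTree X Y, T.Computes f ∧ T.leavesLabeled true = c}

/-- Minimal number of `0`-leaves of a protocol tree computing `f`. -/
noncomputable def C0P {X Y : Type} (f : X → Y → Bool) : ℕ :=
  sInf {c | ∃ T : PTree X Y, T.Computes f ∧ T.leavesLabeled false = c}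

/-!
A tree of depth `d` has at most `2^d` leaves, which gives the lower bound. For the upper bound a
tree with `L ≥ 4` leaves is rebalanced around a node `v` whose subtree has more than `L/2` leaves
while both children of `v` have at most `L/2`. The inputs reaching `v` form a rectangle `A × B`,
so two bits tell whether the run passes through `v`. Inside the rectangle the players run `v`'s
own bit followed by its rebalanced children; outside it they run the rebalanced tree with `v`
replaced by a leaf, which has at most `(L + 1)/2` leaves. Inductively `2^D ≤ L^3`, because
`4 ((L + 1)/2)^3 ≤ L^3` for `L ≥ 4` and `8 (L/2)^3 = L^3`.
-/

lemma four_mul_cube_le_cube {c L : ℕ} (hL : 4 ≤ L) (hc : 2 * c ≤ L + 1) : 4 * c ^ 3 ≤ L ^ 3 := by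
  have h2c : (2 * c) ^ 3 ≤ (L + 1) ^ 3 := Nat.pow_le_pow_left hc 3
  have hL1 : (L + 1) ^ 3 ≤ 2 * L ^ 3 := by
    nlinarith [Nat.mul_le_mul_left (L * L) hL, Nat.mul_le_mul_left L hL]
  nlinarith

lemma two_pow_max_succ_le {a b u v : ℕ} (ha : 2 ^ a ≤ u ^ 3) (hb : 2 ^ b ≤ v ^ 3) :
    2 ^ (max a b + 1) ≤ 2 * max u v ^ 3 := by
  rw [pow_succ, mul_comm, (pow_right_mono₀ one_le_two).map_max,
    (pow_left_mono 3).map_max]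
  exact Nat.mul_le_mul_left 2 (max_le_max ha hb)

lemma Real.logb_two_natCast_le_of_le_two_pow {c d : ℕ} (h : c ≤ 2 ^ d) : Real.logb 2 c ≤ d := by
  rcases c.eq_zero_or_pos with rfl | hc
  · simp
  calc Real.logb 2 c ≤ Real.logb 2 (2 ^ d) :=
        Real.logb_le_logb_of_le one_lt_two (by exact_mod_cast hc) (by exact_mod_cast h)
    _ = d := by rw [Real.logb_pow, Real.logb_self_eq_one one_lt_two, mul_one]

lemma Real.le_three_mul_logb_two_of_two_pow_le_cube {c : ℝ} {d : ℕ} (h : 2 ^ d ≤ c ^ 3) :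
    d ≤ 3 * Real.logb 2 c := by
  calc (d : ℝ) = Real.logb 2 (2 ^ d) := by
        rw [Real.logb_pow, Real.logb_self_eq_one one_lt_two, mul_one]
    _ ≤ Real.logb 2 (c ^ 3) := Real.logb_le_logb_of_le one_lt_two (by positivity) h
    _ = 3 * Real.logb 2 c := by rw [Real.logb_pow]; norm_num

namespace PTree
variable {X Y : Type}

def maxChildLeaves : PTree X Y → ℕ
  | leaf _ => 0
  | nodeA _ l r | nodeB _ l r => max l.leaves r.leaves

def rectIte (A : X → Bool) (B : Y → Bool) (S P : PTree X Y) : PTree X Y :=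
  nodeA A P (nodeB B P S)

lemma eval_rectIte (A : X → Bool) (B : Y → Bool) (S P : PTree X Y) (x : X) (y : Y) :
    (rectIte A B S P).eval x y = if A x && B y then S.eval x y else P.eval x y := by
  cases hA : A x <;> cases hB : B y <;> simp [rectIte, eval, hA, hB]

lemma depth_rectIte (A : X → Bool) (B : Y → Bool) (S P : PTree X Y) :
    (rectIte A B S P).depth ≤ max P.depth S.depth + 2 := by
  simp only [rectIte, depth]
  omega

lemma Computes.trans {T T' : PTree X Y} {f : X → Y → Bool} (h' : T'.Computes T.eval)
    (h : T.Computes f) : T'.Computes f :=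
  fun x y => (h' x y).trans (h x y)

lemma one_le_leaves (T : PTree X Y) : 1 ≤ T.leaves := by
  induction T with
  | leaf => rfl
  | nodeA _ l r | nodeB _ l r => simp only [leaves]; omega

lemma depth_lt_leaves (T : PTree X Y) : T.depth < T.leaves := by
  induction T with
  | leaf => simp [depth, leaves]
  | nodeA _ l r ihl ihr | nodeB _ l r ihl ihr => simp only [depth, leaves]; omega

lemma leaves_le_two_pow_depth (T : PTree X Y) : T.leaves ≤ 2 ^ T.depth := by
  induction T with
  | leaf => rfl
  | nodeA _ l r ihl ihr | nodeB _ l r ihl ihr =>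
    have hl : 2 ^ l.depth ≤ 2 ^ max l.depth r.depth :=
      Nat.pow_le_pow_right two_pos (le_max_left ..)
    have hr : 2 ^ r.depth ≤ 2 ^ max l.depth r.depth :=
      Nat.pow_le_pow_right two_pos (le_max_right ..)
    simp only [depth, leaves, pow_succ]
    omega

/-- Cutting `T` at a subtree `S` whose inputs form the rectangle `A × B`, with `P` being `T` with
`S` replaced by a leaf; only the leaf counts and the evaluations are recorded. -/
structure IsCut (T S P : PTree X Y) (A : X → Bool) (B : Y → Bool) : Prop where
  leaves_add : P.leaves + S.leaves = T.leaves + 1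
  eval_inside : ∀ x y, A x = true → B y = true → S.eval x y = T.eval x y
  eval_outside : ∀ x y, (A x && B y) = false → P.eval x y = T.eval x y

namespace IsCut
variable {S P l r : PTree X Y} {A : X → Bool} {B : Y → Bool}

lemma root (T : PTree X Y) : IsCut T T (leaf false) (fun _ => true) (fun _ => true) where
  leaves_add := by rw [leaves, Nat.add_comm]
  eval_inside _ _ _ _ := rfl
  eval_outside _ _ h := by simp at h

lemma nodeA_left (g : X → Bool) (h : IsCut l S P A B) :
    IsCut (nodeA g l r) S (nodeA g P r) (fun x => !g x && A x) B where
  leaves_add := by simp only [leaves]; have := h.leaves_add; omega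
  eval_inside x y hA hB := by
    simp only [Bool.and_eq_true, Bool.not_eq_true'] at hA
    simp [eval, hA.1, h.eval_inside x y hA.2 hB]
  eval_outside x y hAB := by
    cases hg : g x
    · simp only [hg, Bool.not_false, Bool.true_and] at hAB
      simp [eval, hg, h.eval_outside x y hAB]
    · simp [eval, hg]

lemma nodeA_right (g : X → Bool) (h : IsCut r S P A B) :
    IsCut (nodeA g l r) S (nodeA g l P) (fun x => g x && A x) B where
  leaves_add := by simp only [leaves]; have := h.leaves_add; omega
  eval_inside x y hA hB := by
    simp only [Bool.and_eq_true] at hA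
    simp [eval, hA.1, h.eval_inside x y hA.2 hB]
  eval_outside x y hAB := by
    cases hg : g x
    · simp [eval, hg]
    · simp only [hg, Bool.true_and] at hAB
      simp [eval, hg, h.eval_outside x y hAB]

lemma nodeB_left (g : Y → Bool) (h : IsCut l S P A B) :
    IsCut (nodeB g l r) S (nodeB g P r) A (fun y => !g y && B y) where
  leaves_add := by simp only [leaves]; have := h.leaves_add; omega
  eval_inside x y hA hB := by
    simp only [Bool.and_eq_true, Bool.not_eq_true'] at hB
    simp [eval, hB.1, h.eval_inside x y hA hB.2]
  eval_outside x y hAB := by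
    cases hg : g y
    · simp only [hg, Bool.not_false, Bool.true_and] at hAB
      simp [eval, hg, h.eval_outside x y hAB]
    · simp [eval, hg]

lemma nodeB_right (g : Y → Bool) (h : IsCut r S P A B) :
    IsCut (nodeB g l r) S (nodeB g l P) A (fun y => g y && B y) where
  leaves_add := by simp only [leaves]; have := h.leaves_add; omega
  eval_inside x y hA hB := by
    simp only [Bool.and_eq_true] at hB
    simp [eval, hB.1, h.eval_inside x y hA hB.2]
  eval_outside x y hAB := by
    cases hg : g y
    · simp [eval, hg]
    · simp only [hg, Bool.true_and] at hAB
      simp [eval, hg, h.eval_outside x y hAB]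

lemma computes_rectIte {T S' P' : PTree X Y} (h : IsCut T S P A B) (hS : S'.Computes S.eval)
    (hP : P'.Computes P.eval) : (rectIte A B S' P').Computes T.eval := by
  intro x y
  rw [eval_rectIte]
  cases hAB : (A x && B y)
  · simp [hP x y, h.eval_outside x y hAB]
  · simp only [Bool.and_eq_true] at hAB
    simp [hS x y, h.eval_inside x y hAB.1 hAB.2]

end IsCut

lemma exists_isCut {θ : ℕ} (hθ : 0 < θ) (T : PTree X Y) (hT : θ ≤ T.leaves) :
    ∃ (S P : PTree X Y) (A : X → Bool) (B : Y → Bool),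
      θ ≤ S.leaves ∧ S.maxChildLeaves < θ ∧ IsCut T S P A B := by
  induction T with
  | leaf =>
    exact ⟨_, _, _, _, hT, by rwa [maxChildLeaves], IsCut.root _⟩
  | nodeA g l r ihl ihr =>
    by_cases hl : θ ≤ l.leaves
    · obtain ⟨S, P, A, B, hS, hSmax, hcut⟩ := ihl hl
      exact ⟨S, _, _, B, hS, hSmax, hcut.nodeA_left g⟩
    by_cases hr : θ ≤ r.leaves
    · obtain ⟨S, P, A, B, hS, hSmax, hcut⟩ := ihr hr
      exact ⟨S, _, _, B, hS, hSmax, hcut.nodeA_right g⟩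
    exact ⟨_, _, _, _, hT, by simp only [maxChildLeaves]; omega, IsCut.root _⟩
  | nodeB g l r ihl ihr =>
    by_cases hl : θ ≤ l.leaves
    · obtain ⟨S, P, A, B, hS, hSmax, hcut⟩ := ihl hl
      exact ⟨S, _, A, _, hS, hSmax, hcut.nodeB_left g⟩
    by_cases hr : θ ≤ r.leaves
    · obtain ⟨S, P, A, B, hS, hSmax, hcut⟩ := ihr hr
      exact ⟨S, _, A, _, hS, hSmax, hcut.nodeB_right g⟩
    exact ⟨_, _, _, _, hT, by simp only [maxChildLeaves]; omega, IsCut.root _⟩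

lemma two_pow_depth_le_leaves_cube_of_leaves_lt_four (T : PTree X Y) (hT : T.leaves < 4) :
    2 ^ T.depth ≤ T.leaves ^ 3 := by
  have h1 := T.one_le_leaves
  have h2 := T.depth_lt_leaves
  generalize T.depth = d at *
  interval_cases T.leaves <;> interval_cases d <;> norm_num

lemma exists_computes_two_pow_depth_le_of_maxChildLeaves_lt {n : ℕ}
    (ih : ∀ T : PTree X Y, T.leaves < n →
      ∃ T' : PTree X Y, T'.Computes T.eval ∧ 2 ^ T'.depth ≤ T.leaves ^ 3)
    (S : PTree X Y) (hS : S.maxChildLeaves < n) (hS2 : 2 ≤ S.leaves) :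
    ∃ S' : PTree X Y, S'.Computes S.eval ∧ 2 ^ S'.depth ≤ 2 * S.maxChildLeaves ^ 3 := by
  cases S with
  | leaf => simp [leaves] at hS2
  | nodeA g l r =>
    simp only [maxChildLeaves] at hS ⊢
    obtain ⟨l', hl', hld⟩ := ih l (by omega)
    obtain ⟨r', hr', hrd⟩ := ih r (by omega)
    exact ⟨nodeA g l' r', fun x y => by simp [eval, hl' x y, hr' x y],
      two_pow_max_succ_le hld hrd⟩
  | nodeB g l r =>
    simp only [maxChildLeaves] at hS ⊢
    obtain ⟨l', hl', hld⟩ := ih l (by omega)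
    obtain ⟨r', hr', hrd⟩ := ih r (by omega)
    exact ⟨nodeB g l' r', fun x y => by simp [eval, hl' x y, hr' x y],
      two_pow_max_succ_le hld hrd⟩

theorem exists_computes_two_pow_depth_le_leaves_cube (T : PTree X Y) :
    ∃ T' : PTree X Y, T'.Computes T.eval ∧ 2 ^ T'.depth ≤ T.leaves ^ 3 := by
  induction hL : T.leaves using Nat.strong_induction_on generalizing T with
  | _ L ih =>
  replace ih : ∀ T : PTree X Y, T.leaves < L →
      ∃ T' : PTree X Y, T'.Computes T.eval ∧ 2 ^ T'.depth ≤ T.leaves ^ 3 :=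
    fun T hT => ih _ hT T rfl
  rcases lt_or_ge L 4 with hsmall | hL4
  · exact ⟨T, fun _ _ => rfl,
      hL ▸ T.two_pow_depth_le_leaves_cube_of_leaves_lt_four (hL ▸ hsmall)⟩
  obtain ⟨S, P, A, B, hS, hSmax, hcut⟩ := exists_isCut (Nat.succ_pos (L / 2)) T (by omega)
  have hP : 2 * P.leaves ≤ L + 1 := by have := hcut.leaves_add; omega
  obtain ⟨P', hP', hPd⟩ := ih P (by omega)
  obtain ⟨S', hS', hSd⟩ :=
    exists_computes_two_pow_depth_le_of_maxChildLeaves_lt ih S (by omega) (by omega)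
  refine ⟨rectIte A B S' P', hcut.computes_rectIte hS' hP', ?_⟩
  have hSL : 8 * S.maxChildLeaves ^ 3 ≤ L ^ 3 := by
    simpa [mul_pow] using Nat.pow_le_pow_left (show 2 * S.maxChildLeaves ≤ L by omega) 3
  calc 2 ^ (rectIte A B S' P').depth
      ≤ 2 ^ (max P'.depth S'.depth + 2) := Nat.pow_le_pow_right two_pos (depth_rectIte ..)
    _ = 4 * max (2 ^ P'.depth) (2 ^ S'.depth) := by
      rw [pow_add, mul_comm, (pow_right_mono₀ one_le_two).map_max]; norm_num
    _ ≤ L ^ 3 := by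
      rw [mul_max_of_nonneg _ _ (by norm_num)]
      refine max_le ?_ ?_
      · exact (Nat.mul_le_mul_left 4 hPd).trans (four_mul_cube_le_cube hL4 hP)
      · omega

end PTree

section ProtocolComplexity
variable {X Y : Type} {f : X → Y → Bool}

lemma CP_le_two_pow_Dcc (h : ∃ T : PTree X Y, T.Computes f) : CP f ≤ 2 ^ Dcc f := by
  obtain ⟨T, hT, hdepth⟩ :=
    Nat.sInf_mem (s := {d | ∃ T : PTree X Y, T.Computes f ∧ T.depth = d})
      (h.elim fun T hT => ⟨_, T, hT, rfl⟩)
  calc CP f ≤ T.leaves := Nat.sInf_le ⟨T, hT, rfl⟩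
    _ ≤ 2 ^ T.depth := T.leaves_le_two_pow_depth
    _ = 2 ^ Dcc f := by rw [hdepth, Dcc]

lemma two_pow_Dcc_le_CP_cube (h : ∃ T : PTree X Y, T.Computes f) : 2 ^ Dcc f ≤ CP f ^ 3 := by
  obtain ⟨T, hT, hleaves⟩ :=
    Nat.sInf_mem (s := {c | ∃ T : PTree X Y, T.Computes f ∧ T.leaves = c})
      (h.elim fun T hT => ⟨_, T, hT, rfl⟩)
  obtain ⟨T', hT', hbound⟩ := T.exists_computes_two_pow_depth_le_leaves_cube
  calc 2 ^ Dcc f ≤ 2 ^ T'.depth :=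
        Nat.pow_le_pow_right two_pos (Nat.sInf_le ⟨T', hT'.trans hT, rfl⟩)
    _ ≤ T.leaves ^ 3 := hbound
    _ = CP f ^ 3 := by rw [hleaves, CP]

lemma CP_eq_zero_and_Dcc_eq_zero (h : ¬∃ T : PTree X Y, T.Computes f) :
    CP f = 0 ∧ Dcc f = 0 := by
  simp [CP, Dcc, not_exists.mp h]

end ProtocolComplexity

theorem logCP_le_D_le_three_logCP_general {X Y : Type} (f : X → Y → Bool) :
    Real.logb 2 (CP f) ≤ (Dcc f : ℝ) ∧ (Dcc f : ℝ) ≤ 3 * Real.logb 2 (CP f) := by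
  by_cases h : ∃ T : PTree X Y, T.Computes f
  · exact ⟨Real.logb_two_natCast_le_of_le_two_pow (CP_le_two_pow_Dcc h),
      Real.le_three_mul_logb_two_of_two_pow_le_cube (by exact_mod_cast two_pow_Dcc_le_CP_cube h)⟩
  · obtain ⟨hCP, hD⟩ := CP_eq_zero_and_Dcc_eq_zero h
    simp [hCP, hD]

/-- `log₂ Cᴾ(f) ≤ D(f) ≤ 3 log₂ Cᴾ(f)`. -/
theorem logCP_le_D_le_three_logCP {X Y : Type} [Fintype X] [Fintype Y]
    [DecidableEq X] [DecidableEq Y] (f : X → Y → Bool) :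
    Real.logb 2 (CP f) ≤ (Dcc f : ℝ) ∧ (Dcc f : ℝ) ≤ 3 * Real.logb 2 (CP f) :=
  logCP_le_D_le_three_logCP_general f
end

section
/- For any non-constant Boolean function f, C₀ᴾ(f) ≤ 4·C₁ᴾ(f) − 2, where C₀ᴾ(f) and C₁ᴾ(f) are the minimum numbers of 0-leaves and 1-leaves respectively over protocol trees computing f. -/
namespace PTree
variable {X Y : Type}

lemma eval_of_no_true : ∀ (T : PTree X Y), T.leavesLabeled true = 0 →
    ∀ x y, T.eval x y = false := by
  intro T
  induction T with
  | leaf b =>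
      intro h x y
      cases b
      · simp [eval]
      · simp [leavesLabeled] at h
  | nodeA g l r ihl ihr =>
      intro h x y
      simp only [leavesLabeled, Nat.add_eq_zero] at h
      simp [eval, ihl h.1, ihr h.2]
  | nodeB g l r ihl ihr =>
      intro h x y
      simp only [leavesLabeled, Nat.add_eq_zero] at h
      simp [eval, ihl h.1, ihr h.2]

/-- Guard a tree by a condition of Alice and a condition of Bob. -/
def wrap (a : X → Bool) (b : Y → Bool) (C : PTree X Y) : PTree X Y :=
  nodeA a (leaf false) (nodeB b (leaf false) C)

lemma wrap_eval (a : X → Bool) (b : Y → Bool) (C : PTree X Y) (x : X) (y : Y) :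
    (wrap a b C).eval x y = ((a x && b y) && C.eval x y) := by
  cases ha : a x <;> cases hb : b y <;> simp [wrap, eval, ha, hb]

lemma wrap_count (a : X → Bool) (b : Y → Bool) (C : PTree X Y) :
    (wrap a b C).leavesLabeled false = 2 + C.leavesLabeled false := by
  simp [wrap, leavesLabeled]; omega

/-- Compress a tree into a guard pair `(a, b)` and a core tree with few `0`-leaves. -/
def compress : PTree X Y → (X → Bool) × (Y → Bool) × PTree X Y
  | leaf b => (fun _ => b, fun _ => true, leaf true)
  | nodeA g l r =>
    if l.leavesLabeled true = 0 then
      ((fun x => g x && (compress r).1 x), (compress r).2.1, (compress r).2.2)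
    else if r.leavesLabeled true = 0 then
      ((fun x => !g x && (compress l).1 x), (compress l).2.1, (compress l).2.2)
    else
      (fun _ => true, fun _ => true,
        nodeA g (wrap (compress l).1 (compress l).2.1 (compress l).2.2)
                (wrap (compress r).1 (compress r).2.1 (compress r).2.2))
  | nodeB g l r =>
    if l.leavesLabeled true = 0 then
      ((compress r).1, (fun y => g y && (compress r).2.1 y), (compress r).2.2)
    else if r.leavesLabeled true = 0 then
      ((compress l).1, (fun y => !g y && (compress l).2.1 y), (compress l).2.2)
    else
      (fun _ => true, fun _ => true,
        nodeB g (wrap (compress l).1 (compress l).2.1 (compress l).2.2)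
                (wrap (compress r).1 (compress r).2.1 (compress r).2.2))

lemma compress_eval : ∀ (T : PTree X Y) (x : X) (y : Y),
    T.eval x y = (((compress T).1 x && (compress T).2.1 y) && (compress T).2.2.eval x y) := by
  intro T
  induction T with
  | leaf b => intro x y; simp [compress, eval]
  | nodeA g l r ihl ihr =>
      intro x y
      simp only [compress]
      split_ifs with h1 h2
      · cases hg : g x <;>
          simp [eval, hg, ihr x y, eval_of_no_true l h1 x y]
      · cases hg : g x <;>
          simp [eval, hg, ihl x y, eval_of_no_true r h2 x y]
      · cases hg : g x <;>
          simp [eval, hg, wrap_eval, ihl x y, ihr x y, Bool.and_assoc]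
  | nodeB g l r ihl ihr =>
      intro x y
      simp only [compress]
      split_ifs with h1 h2
      · cases hg : g y <;>
          simp [eval, hg, ihr x y, eval_of_no_true l h1 x y]
      · cases hg : g y <;>
          simp [eval, hg, ihl x y, eval_of_no_true r h2 x y]
      · cases hg : g y <;>
          simp [eval, hg, wrap_eval, ihl x y, ihr x y, Bool.and_assoc]

lemma compress_count : ∀ (T : PTree X Y), 1 ≤ T.leavesLabeled true →
    (compress T).2.2.leavesLabeled false + 4 ≤ 4 * T.leavesLabeled true := by
  intro T
  induction T with
  | leaf b =>
      intro h
      cases b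
      · simp [leavesLabeled] at h
      · simp [compress, leavesLabeled]
  | nodeA g l r ihl ihr =>
      intro h
      simp only [leavesLabeled] at h ⊢
      simp only [compress]
      split_ifs with h1 h2
      · dsimp only; have := ihr (by omega); omega
      · dsimp only; have := ihl (by omega); omega
      · have hl := ihl (by omega)
        have hr := ihr (by omega)
        simp [leavesLabeled, wrap_count]
        omega
  | nodeB g l r ihl ihr =>
      intro h
      simp only [leavesLabeled] at h ⊢
      simp only [compress]
      split_ifs with h1 h2
      · dsimp only; have := ihr (by omega); omega
      · dsimp only; have := ihl (by omega); omega
      · have hl := ihl (by omega)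
        have hr := ihr (by omega)
        simp [leavesLabeled, wrap_count]
        omega

end PTree

/-- For any non-constant Boolean function `f`, `C₀ᴾ(f) ≤ 4 C₁ᴾ(f) − 2`. -/
theorem C0P_le_four_C1P_sub_two {X Y : Type} (f : X → Y → Bool)
    (hf : ¬ ∃ b : Bool, ∀ x y, f x y = b) :
    C0P f ≤ 4 * C1P f - 2 := by
  by_cases hT : ∃ T : PTree X Y, T.Computes f
  · -- the set of achievable 1-leaf counts is nonempty; take a minimizer
    obtain ⟨T₀, hT₀⟩ := hT
    have hne : {c | ∃ T : PTree X Y, T.Computes f ∧ T.leavesLabeled true = c}.Nonempty :=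
      ⟨T₀.leavesLabeled true, T₀, hT₀, rfl⟩
    have hmem := Nat.sInf_mem hne
    obtain ⟨T, hTc, hTt⟩ := hmem
    -- T has at least one 1-leaf since f is non-constant
    have ht1 : 1 ≤ T.leavesLabeled true := by
      by_contra h
      have h0 : T.leavesLabeled true = 0 := by omega
      exact hf ⟨false, fun x y => by rw [← hTc x y, PTree.eval_of_no_true T h0]⟩
    -- build the compressed protocol
    obtain ⟨a, b, C⟩ : (X → Bool) × (Y → Bool) × PTree X Y := PTree.compress T
    have hcomp : (PTree.wrap (PTree.compress T).1 (PTree.compress T).2.1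
        (PTree.compress T).2.2).Computes f := by
      intro x y
      rw [PTree.wrap_eval, ← PTree.compress_eval, hTc]
    have hcount := PTree.compress_count T ht1
    have hle : C0P f ≤ (PTree.wrap (PTree.compress T).1 (PTree.compress T).2.1
        (PTree.compress T).2.2).leavesLabeled false :=
      Nat.sInf_le ⟨_, hcomp, rfl⟩
    rw [PTree.wrap_count] at hle
    rw [C1P, ← hTt]
    omega
  · -- no protocol computes f at all: both sides are sInf of the empty set
    have h0 : C0P f = 0 := by
      rw [C0P, Nat.sInf_eq_zero]
      right
      ext c
      simp only [Set.mem_setOf_eq, Set.mem_empty_iff_false, iff_false]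
      rintro ⟨T, hTc, -⟩
      exact hT ⟨T, hTc⟩
    omega
end

section
/- For any Boolean function f whose protocol partition number exceeds 3, C₀ᴾ(f) ≤ (3/2)·C₁ᴾ(f). -/
namespace PTree
variable {X Y : Type}

def rect (p : X → Bool) (q : Y → Bool) : PTree X Y :=
  nodeA p (leaf false) (nodeB q (leaf false) (leaf true))

@[simp]
lemma eval_rect (p : X → Bool) (q : Y → Bool) (x : X) (y : Y) :
    (rect p q).eval x y = (p x && q y) := by
  cases hp : p x <;> cases hq : q y <;> simp [rect, eval, hp, hq]

lemma leaves_rect (p : X → Bool) (q : Y → Bool) : (rect p q).leaves = 3 := rfl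

lemma leavesLabeled_false_rect (p : X → Bool) (q : Y → Bool) :
    (rect p q).leavesLabeled false = 2 := rfl

def swap : PTree X Y → PTree Y X
  | leaf b => leaf b
  | nodeA g l r => nodeB g (swap l) (swap r)
  | nodeB g l r => nodeA g (swap l) (swap r)

@[simp]
lemma eval_swap (T : PTree X Y) : T.swap.eval = flip T.eval := by
  induction T <;> funext y x <;> simp [swap, eval, Function.flip_def, *]

@[simp]
lemma leavesLabeled_swap (c : Bool) (T : PTree X Y) :
    T.swap.leavesLabeled c = T.leavesLabeled c := by
  induction T <;> simp [swap, leavesLabeled, *]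

lemma eval_eq_false_of_leavesLabeled_true_eq_zero {T : PTree X Y}
    (h : T.leavesLabeled true = 0) (x : X) (y : Y) : T.eval x y = false := by
  induction T with
  | leaf b => cases b <;> simp_all [leavesLabeled, eval]
  | nodeA g l r ihl ihr =>
    simp only [leavesLabeled, Nat.add_eq_zero_iff] at h
    cases g x <;> simp [eval, *]
  | nodeB g l r ihl ihr =>
    simp only [leavesLabeled, Nat.add_eq_zero_iff] at h
    cases g y <;> simp [eval, *]

lemma exists_eval_eq_and_of_leavesLabeled_true_le_one {T : PTree X Y}
    (h : T.leavesLabeled true ≤ 1) :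
    ∃ (A : X → Bool) (B : Y → Bool), ∀ x y, T.eval x y = (A x && B y) := by
  induction T with
  | leaf b => exact ⟨fun _ => b, fun _ => true, by simp [eval]⟩
  | nodeA g l r ihl ihr =>
    simp only [leavesLabeled] at h
    by_cases hl : l.leavesLabeled true = 0
    · obtain ⟨A, B, hAB⟩ := ihr (by omega)
      refine ⟨fun x => g x && A x, B, fun x y => ?_⟩
      cases hg : g x <;> simp [eval, hg, hAB, eval_eq_false_of_leavesLabeled_true_eq_zero hl]
    · have hr : r.leavesLabeled true = 0 := by omega
      obtain ⟨A, B, hAB⟩ := ihl (by omega)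
      refine ⟨fun x => !g x && A x, B, fun x y => ?_⟩
      cases hg : g x <;> simp [eval, hg, hAB, eval_eq_false_of_leavesLabeled_true_eq_zero hr]
  | nodeB g l r ihl ihr =>
    simp only [leavesLabeled] at h
    by_cases hl : l.leavesLabeled true = 0
    · obtain ⟨A, B, hAB⟩ := ihr (by omega)
      refine ⟨A, fun y => g y && B y, fun x y => ?_⟩
      cases hg : g y <;> simp [eval, hg, hAB, eval_eq_false_of_leavesLabeled_true_eq_zero hl]
    · have hr : r.leavesLabeled true = 0 := by omega
      obtain ⟨A, B, hAB⟩ := ihl (by omega)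
      refine ⟨A, fun y => !g y && B y, fun x y => ?_⟩
      cases hg : g y <;> simp [eval, hg, hAB, eval_eq_false_of_leavesLabeled_true_eq_zero hr]

end PTree

open PTree

/-- The restriction of `f` to any rectangle `p × q` is computed by a protocol tree with at most
`n / 2` leaves labelled `0` (the bound is doubled to stay in `ℕ`). -/
def RectZeroCost {X Y : Type} (f : X → Y → Bool) (n : ℕ) : Prop :=
  ∀ (p : X → Bool) (q : Y → Bool), ∃ T : PTree X Y,
    T.Computes (fun x y => p x && q y && f x y) ∧ 2 * T.leavesLabeled false ≤ n

namespace RectZeroCost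
variable {X Y : Type} {f f₀ f₁ : X → Y → Bool} {m n : ℕ}

lemma mono (hf : RectZeroCost f m) (hmn : m ≤ n) : RectZeroCost f n := fun p q =>
  (hf p q).imp fun _ hT => ⟨hT.1, hT.2.trans hmn⟩

lemma congr (hf : RectZeroCost f n) (h : ∀ x y, f x y = f₁ x y) : RectZeroCost f₁ n := by
  rwa [← funext fun x => funext (h x)]

lemma flip (hf : RectZeroCost f n) : RectZeroCost (_root_.flip f) n := fun p q => by
  obtain ⟨T, hT, hz⟩ := hf q p
  refine ⟨T.swap, fun y x => ?_, by simpa using hz⟩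
  simp [Function.flip_def, hT x y, Bool.and_comm]

@[simp]
lemma flip_iff : RectZeroCost (_root_.flip f) n ↔ RectZeroCost f n :=
  ⟨fun hf => hf.flip, fun hf => hf.flip⟩

lemma and_left (g : X → Bool) (hf : RectZeroCost f n) :
    RectZeroCost (fun x y => g x && f x y) n := fun p q => by
  obtain ⟨T, hT, hz⟩ := hf (fun x => p x && g x) q
  exact ⟨T, fun x y => by simp [hT x y, Bool.and_assoc, Bool.and_left_comm], hz⟩

lemma of_eq_and {A : X → Bool} {B : Y → Bool} (hf : ∀ x y, f x y = (A x && B y)) :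
    RectZeroCost f 4 := fun p q =>
  ⟨rect (fun x => p x && A x) (fun y => q y && B y),
    fun x y => by simp [hf, Bool.and_assoc, Bool.and_left_comm],
    by rw [leavesLabeled_false_rect]⟩

lemma ite (g : X → Bool) (h₀ : RectZeroCost f₀ m) (h₁ : RectZeroCost f₁ n) :
    RectZeroCost (fun x y => if g x then f₁ x y else f₀ x y) (m + n) := fun p q => by
  obtain ⟨T₀, hT₀, hz₀⟩ := h₀ p q
  obtain ⟨T₁, hT₁, hz₁⟩ := h₁ p q
  refine ⟨nodeA g T₀ T₁, fun x y => ?_, by simp only [leavesLabeled]; omega⟩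
  cases hg : g x <;> simp [eval, hg, hT₀ x y, hT₁ x y]

lemma ite_and (g : X → Bool) {A : X → Bool} {B : Y → Bool} (h₁ : RectZeroCost f₁ n) :
    RectZeroCost (fun x y => if g x then f₁ x y else (A x && B y)) (n + 2) := fun p q => by
  obtain ⟨T, hT, hz⟩ := h₁ (fun x => p x && g x) q
  -- `T` vanishes where `g` fails, so it can be the fallback of the rectangle test there
  refine ⟨nodeA (fun x => p x && !g x && A x) T
    (nodeB (fun y => q y && B y) (leaf false) (leaf true)), fun x y => ?_, ?_⟩
  · cases hg : g x <;> cases hp : p x <;> cases hA : A x <;> simp [eval, hT x y, hg, hp, hA]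
  · simp [leavesLabeled]
    omega

end RectZeroCost

namespace PTree
variable {X Y : Type}

lemma rectZeroCost_succ_of_one_le {T : PTree X Y} (h : 1 ≤ T.leavesLabeled true)
    (ih : 2 ≤ T.leavesLabeled true → RectZeroCost T.eval (3 * T.leavesLabeled true)) :
    RectZeroCost T.eval (3 * T.leavesLabeled true + 1) := by
  rcases h.eq_or_lt with h1 | h2
  · obtain ⟨A, B, hAB⟩ := exists_eval_eq_and_of_leavesLabeled_true_le_one h1.ge
    exact (RectZeroCost.of_eq_and hAB).mono (by omega)
  · exact (ih h2).mono (by omega)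

lemma rectZeroCost_nodeA (g : X → Bool) {l r : PTree X Y}
    (ihl : 2 ≤ l.leavesLabeled true → RectZeroCost l.eval (3 * l.leavesLabeled true))
    (ihr : 2 ≤ r.leavesLabeled true → RectZeroCost r.eval (3 * r.leavesLabeled true))
    (h : 2 ≤ (nodeA g l r).leavesLabeled true) :
    RectZeroCost (nodeA g l r).eval (3 * (nodeA g l r).leavesLabeled true) := by
  simp only [leavesLabeled] at h ⊢
  have heval : (nodeA g l r).eval = fun x y => if g x then r.eval x y else l.eval x y := rfl
  have heval' : (nodeA g l r).eval = fun x y => if !g x then l.eval x y else r.eval x y := by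
    funext x y; cases hg : g x <;> simp [eval, hg]
  by_cases hl0 : l.leavesLabeled true = 0
  · refine ((ihr (by omega)).and_left g).mono (by omega) |>.congr fun x y => ?_
    cases hg : g x <;> simp [eval, hg, eval_eq_false_of_leavesLabeled_true_eq_zero hl0]
  by_cases hr0 : r.leavesLabeled true = 0
  · refine ((ihl (by omega)).and_left (fun x => !g x)).mono (by omega) |>.congr fun x y => ?_
    cases hg : g x <;> simp [eval, hg, eval_eq_false_of_leavesLabeled_true_eq_zero hr0]
  by_cases hl1 : l.leavesLabeled true = 1
  · obtain ⟨A, B, hAB⟩ := exists_eval_eq_and_of_leavesLabeled_true_le_one hl1.le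
    rw [heval]
    simp only [hAB]
    exact ((rectZeroCost_succ_of_one_le (by omega) ihr).ite_and g).mono (by omega)
  by_cases hr1 : r.leavesLabeled true = 1
  · obtain ⟨A, B, hAB⟩ := exists_eval_eq_and_of_leavesLabeled_true_le_one hr1.le
    rw [heval']
    simp only [hAB]
    exact ((rectZeroCost_succ_of_one_le (by omega) ihl).ite_and _).mono (by omega)
  rw [heval]
  exact ((ihl (by omega)).ite g (ihr (by omega))).mono (by omega)

theorem rectZeroCost_of_two_le (T : PTree X Y) (h : 2 ≤ T.leavesLabeled true) :
    RectZeroCost T.eval (3 * T.leavesLabeled true) := by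
  induction T with
  | leaf b => cases b <;> simp [leavesLabeled] at h
  | nodeA g l r ihl ihr => exact rectZeroCost_nodeA g ihl ihr h
  | nodeB g l r ihl ihr =>
    have hswap : (nodeB g l r).eval = flip (nodeA g l.swap r.swap).eval := by
      funext x y; cases g y <;> simp [eval, Function.flip_def]
    have := rectZeroCost_nodeA g (l := l.swap) (r := r.swap) (by simpa using ihl)
      (by simpa using ihr) (by simpa [leavesLabeled] using h)
    rw [hswap, RectZeroCost.flip_iff]
    simpa [leavesLabeled] using this

end PTree

section
variable {X Y : Type} {f : X → Y → Bool}

lemma CP_le_three_of_leavesLabeled_true_le_one {T : PTree X Y} (hT : T.Computes f)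
    (h : T.leavesLabeled true ≤ 1) : CP f ≤ 3 := by
  obtain ⟨A, B, hAB⟩ := exists_eval_eq_and_of_leavesLabeled_true_le_one h
  unfold CP
  exact Nat.sInf_le ⟨rect A B, fun x y => by rw [eval_rect, ← hAB, hT], leaves_rect A B⟩

lemma exists_computes_of_CP_pos (h : 0 < CP f) : ∃ T : PTree X Y, T.Computes f := by
  obtain ⟨_, T, hT, -⟩ := Nat.nonempty_of_pos_sInf h
  exact ⟨T, hT⟩

lemma exists_computes_leavesLabeled_true_eq_C1P {T : PTree X Y} (hT : T.Computes f) :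
    ∃ T : PTree X Y, T.Computes f ∧ T.leavesLabeled true = C1P f :=
  Nat.sInf_mem (s := {c | ∃ T : PTree X Y, T.Computes f ∧ T.leavesLabeled true = c})
    ⟨_, T, hT, rfl⟩

lemma RectZeroCost.two_mul_C0P_le {n : ℕ} (hf : RectZeroCost f n) : 2 * C0P f ≤ n := by
  obtain ⟨T, hT, hz⟩ := hf (fun _ => true) (fun _ => true)
  have hT_C0P : C0P f ≤ T.leavesLabeled false :=
    Nat.sInf_le (s := {c | ∃ T : PTree X Y, T.Computes f ∧ T.leavesLabeled false = c})
      ⟨T, fun x y => by simpa using hT x y, rfl⟩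
  omega

end

/-- If `Cᴾ(f) > 3`, then `C₀ᴾ(f) ≤ (3/2) · C₁ᴾ(f)`. -/
theorem C0P_le_three_halves_C1P {X Y : Type} (f : X → Y → Bool)
    (hf : 3 < CP f) :
    (C0P f : ℚ) ≤ (3 / 2) * (C1P f : ℚ) := by
  obtain ⟨T₀, hT₀⟩ := exists_computes_of_CP_pos (by omega : 0 < CP f)
  obtain ⟨T, hT, hk⟩ := exists_computes_leavesLabeled_true_eq_C1P hT₀
  have h2 : 2 ≤ T.leavesLabeled true := by
    by_contra! h
    exact absurd (CP_le_three_of_leavesLabeled_true_le_one hT (by omega)) (by omega)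
  have hTf : T.eval = f := funext fun x => funext (hT x)
  have key : 2 * C0P f ≤ 3 * C1P f := by
    simpa [hTf, hk] using (T.rectZeroCost_of_two_le h2).two_mul_C0P_le
  have keyQ : (2 * C0P f : ℚ) ≤ 3 * C1P f := by exact_mod_cast key
  linarith
end

section
/- For any non-constant Boolean function f, D(f) ≥ 1 + log₂ rank(M_f), where M_f is the communication matrix of f over the rationals. -/
/-- The communication matrix of `f` over `ℚ`. -/
def commMatrix {X Y : Type} [Fintype X] [Fintype Y] (f : X → Y → Bool) :
    Matrix X Y ℚ :=
  Matrix.of fun x y => if f x y then 1 else 0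


open Matrix Module

lemma my_rank_add_le {X Y : Type} [Fintype X] [Fintype Y] (A B : Matrix X Y ℚ) :
    (A + B).rank ≤ A.rank + B.rank := by
  have hrange : LinearMap.range (A + B).mulVecLin ≤
      LinearMap.range A.mulVecLin ⊔ LinearMap.range B.mulVecLin := by
    rintro _ ⟨v, rfl⟩
    have : (A + B).mulVecLin v = A.mulVecLin v + B.mulVecLin v := by
      simp [Matrix.mulVecLin_apply, Matrix.add_mulVec]
    rw [this]
    exact Submodule.add_mem_sup (LinearMap.mem_range_self _ v) (LinearMap.mem_range_self _ v)
  calc (A + B).rank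
      ≤ finrank ℚ ↑(LinearMap.range A.mulVecLin ⊔ LinearMap.range B.mulVecLin) :=
        Submodule.finrank_mono hrange
    _ ≤ A.rank + B.rank := Submodule.finrank_add_le_finrank_add_finrank _ _

lemma my_rank_one_le {X Y : Type} [Fintype X] [Fintype Y] (a : X → ℚ) (b : Y → ℚ) :
    (Matrix.of fun x y => a x * b y : Matrix X Y ℚ).rank ≤ 1 := by
  have h : (Matrix.of fun x y => a x * b y : Matrix X Y ℚ)
      = (Matrix.of fun x (_ : Unit) => a x) * (Matrix.of fun (_ : Unit) y => b y) := by
    ext x y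
    simp [Matrix.mul_apply]
  rw [h]
  refine (Matrix.rank_mul_le_right _ _).trans ?_
  simpa using Matrix.rank_le_card_height (Matrix.of fun (_ : Unit) y => b y)

lemma my_rank_pos {X Y : Type} [Fintype X] [Fintype Y] [DecidableEq Y]
    (A : Matrix X Y ℚ) (x₀ : X) (y₀ : Y) (h : A x₀ y₀ ≠ 0) : 1 ≤ A.rank := by
  by_contra hlt
  have h0 : A.rank = 0 := by omega
  have : LinearMap.range A.mulVecLin = ⊥ := Submodule.finrank_eq_zero.mp h0
  have hv : A.mulVecLin (Pi.single y₀ 1) = 0 := by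
    have hm : A.mulVecLin (Pi.single y₀ 1) ∈ LinearMap.range A.mulVecLin :=
      LinearMap.mem_range_self _ _
    rw [this] at hm
    simpa using hm
  have := congrFun hv x₀
  simp [Matrix.mulVecLin_apply, Matrix.mulVec_single] at this
  exact h this

namespace RLBaux
open PTree

variable {X Y : Type}

/-- Bob announces `g y`. -/
def bobTree (g : Y → Bool) : PTree X Y :=
  PTree.nodeB g (PTree.leaf false) (PTree.leaf true)

def enumTree [DecidableEq X] (f : X → Y → Bool) : List X → PTree X Y
  | [] => PTree.leaf false
  | x₀ :: rest => PTree.nodeA (fun x => decide (x = x₀)) (enumTree f rest) (bobTree (f x₀))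

lemma enumTree_eval [DecidableEq X] (f : X → Y → Bool) (l : List X) (x : X) (y : Y)
    (hx : x ∈ l) : (enumTree f l).eval x y = f x y := by
  induction l with
  | nil => cases hx
  | cons x₀ rest ih =>
    by_cases h : x = x₀
    · subst h
      simp only [enumTree, PTree.eval, decide_eq_true_eq, if_pos rfl, bobTree]
      cases hb : f x y <;> simp [PTree.eval, hb]
    · have hx' : x ∈ rest := by
        rcases List.mem_cons.mp hx with h' | h'
        · exact absurd h' h
        · exact h'
      simp only [enumTree, PTree.eval, decide_eq_true_eq, if_neg h]
      exact ih hx'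

lemma exists_protocol [Fintype X] [DecidableEq X] (f : X → Y → Bool) :
    ∃ T : PTree X Y, T.Computes f := by
  refine ⟨enumTree f Finset.univ.toList, fun x y => ?_⟩
  exact enumTree_eval f _ x y (by simp)

lemma leavesLabeled_add (T : PTree X Y) :
    T.leavesLabeled true + T.leavesLabeled false = T.leaves := by
  induction T with
  | leaf b => cases b <;> simp [PTree.leavesLabeled, PTree.leaves]
  | nodeA g l r ihl ihr => simp [PTree.leavesLabeled, PTree.leaves, ← ihl, ← ihr]; ring
  | nodeB g l r ihl ihr => simp [PTree.leavesLabeled, PTree.leaves, ← ihl, ← ihr]; ring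

lemma leaves_le_pow (T : PTree X Y) : T.leaves ≤ 2 ^ T.depth := by
  induction T with
  | leaf b => simp [PTree.leaves, PTree.depth]
  | nodeA g l r ihl ihr =>
    have h1 : l.leaves ≤ 2 ^ max l.depth r.depth :=
      ihl.trans (Nat.pow_le_pow_right (by norm_num) (le_max_left _ _))
    have h2 : r.leaves ≤ 2 ^ max l.depth r.depth :=
      ihr.trans (Nat.pow_le_pow_right (by norm_num) (le_max_right _ _))
    simp only [PTree.leaves, PTree.depth, pow_succ]
    omega
  | nodeB g l r ihl ihr =>
    have h1 : l.leaves ≤ 2 ^ max l.depth r.depth :=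
      ihl.trans (Nat.pow_le_pow_right (by norm_num) (le_max_left _ _))
    have h2 : r.leaves ≤ 2 ^ max l.depth r.depth :=
      ihr.trans (Nat.pow_le_pow_right (by norm_num) (le_max_right _ _))
    simp only [PTree.leaves, PTree.depth, pow_succ]
    omega

lemma rank_le_leavesLabeled [Fintype X] [Fintype Y] (c : Bool) (T : PTree X Y) :
    ∀ (a : X → ℚ) (b : Y → ℚ),
    (Matrix.of fun x y => if T.eval x y = c then a x * b y else 0 : Matrix X Y ℚ).rank
      ≤ T.leavesLabeled c := by
  induction T with
  | leaf b' =>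
    intro a b
    by_cases h : b' = c
    · subst h
      have : (Matrix.of fun x y => if (PTree.leaf b' : PTree X Y).eval x y = b'
            then a x * b y else 0 : Matrix X Y ℚ)
          = Matrix.of fun x y => a x * b y := by
        ext x y; simp [PTree.eval]
      rw [this]
      simpa [PTree.leavesLabeled] using my_rank_one_le a b
    · have : (Matrix.of fun x y => if (PTree.leaf b' : PTree X Y).eval x y = c
            then a x * b y else 0 : Matrix X Y ℚ) = 0 := by
        ext x y; simp [PTree.eval, h]
      rw [this]
      simp [PTree.leavesLabeled, h]
  | nodeA g l r ihl ihr =>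
    intro a b
    have hsplit : (Matrix.of fun x y => if (PTree.nodeA g l r).eval x y = c
          then a x * b y else 0 : Matrix X Y ℚ)
        = (Matrix.of fun x y => if l.eval x y = c then (if g x then 0 else a x) * b y else 0)
          + (Matrix.of fun x y => if r.eval x y = c then (if g x then a x else 0) * b y else 0) := by
      ext x y
      by_cases h : g x <;> simp [PTree.eval, h, Matrix.add_apply]
    rw [hsplit]
    calc _ ≤ _ := my_rank_add_le _ _
      _ ≤ l.leavesLabeled c + r.leavesLabeled c := add_le_add (ihl _ _) (ihr _ _)
      _ = (PTree.nodeA g l r).leavesLabeled c := rfl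
  | nodeB g l r ihl ihr =>
    intro a b
    have hsplit : (Matrix.of fun x y => if (PTree.nodeB g l r).eval x y = c
          then a x * b y else 0 : Matrix X Y ℚ)
        = (Matrix.of fun x y => if l.eval x y = c then a x * (if g y then 0 else b y) else 0)
          + (Matrix.of fun x y => if r.eval x y = c then a x * (if g y then b y else 0) else 0) := by
      ext x y
      by_cases h : g y <;> simp [PTree.eval, h, Matrix.add_apply]
    rw [hsplit]
    calc _ ≤ _ := my_rank_add_le _ _
      _ ≤ l.leavesLabeled c + r.leavesLabeled c := add_le_add (ihl _ _) (ihr _ _)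
      _ = (PTree.nodeB g l r).leavesLabeled c := rfl

end RLBaux

/-- Rank lower bound: for non-constant `f`, `D(f) ≥ 1 + log₂ rank(M_f)`. -/
theorem rank_lower_bound {X Y : Type} [Fintype X] [Fintype Y]
    [DecidableEq X] [DecidableEq Y] (f : X → Y → Bool)
    (hf : ¬ ∃ b : Bool, ∀ x y, f x y = b) :
    1 + Real.logb 2 ((commMatrix f).rank) ≤ (Dcc f : ℝ) := by
  classical
  -- the set of depths is nonempty
  obtain ⟨T₀, hT₀⟩ := RLBaux.exists_protocol f
  have hne : {d | ∃ T : PTree X Y, T.Computes f ∧ T.depth = d}.Nonempty :=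
    ⟨T₀.depth, T₀, hT₀, rfl⟩
  obtain ⟨T, hT, hdT⟩ := Nat.sInf_mem hne
  -- f takes value true somewhere
  push_neg at hf
  obtain ⟨x₁, y₁, hxy1⟩ := hf false
  rw [Bool.ne_false_iff] at hxy1
  -- rank ≥ 1
  have hrpos : 1 ≤ (commMatrix f).rank := by
    refine my_rank_pos _ x₁ y₁ ?_
    simp [commMatrix, hxy1]
  -- depth ≥ 1
  have hd1 : 1 ≤ T.depth := by
    cases T with
    | leaf b =>
      exfalso
      obtain ⟨x₂, y₂, hxy2⟩ := hf b
      exact hxy2 (hT x₂ y₂).symm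
    | nodeA g l r => simp [PTree.depth]
    | nodeB g l r => simp [PTree.depth]
  -- rank ≤ number of true leaves
  have h1 : (commMatrix f).rank ≤ T.leavesLabeled true := by
    have heq : commMatrix f
        = Matrix.of fun x y => if T.eval x y = true then (1 : ℚ) * 1 else 0 := by
      ext x y
      by_cases h : f x y <;> simp [commMatrix, hT x y, h]
    rw [heq]
    exact RLBaux.rank_le_leavesLabeled true T _ _
  -- rank ≤ 1 + number of false leaves
  have h0 : (commMatrix f).rank ≤ 1 + T.leavesLabeled false := by
    have heq : commMatrix f
        = (Matrix.of fun _ _ => (1 : ℚ) * 1)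
          + (Matrix.of fun x y => if T.eval x y = false then (-1 : ℚ) * 1 else 0) := by
      ext x y
      by_cases h : f x y <;> simp [commMatrix, hT x y, h, Matrix.add_apply]
    calc (commMatrix f).rank ≤ _ := heq ▸ my_rank_add_le _ _
      _ ≤ 1 + T.leavesLabeled false :=
        add_le_add (my_rank_one_le _ _) (RLBaux.rank_le_leavesLabeled false T _ _)
  -- combine
  set e : ℕ := T.depth - 1 with he
  have hpow : 2 ^ T.depth = 2 * 2 ^ e := by
    rw [he]
    rw [← pow_succ']
    congr 1
    omega
  have hleaves := RLBaux.leaves_le_pow T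
  have hsum := RLBaux.leavesLabeled_add T
  have hrank_le : (commMatrix f).rank ≤ 2 ^ e := by omega
  -- now the real-number computation
  have hDcc : (Dcc f : ℝ) = (e : ℝ) + 1 := by
    have : Dcc f = T.depth := hdT.symm ▸ rfl
    rw [this]
    have : T.depth = e + 1 := by omega
    rw [this]; push_cast; ring
  rw [hDcc]
  have hlog : Real.logb 2 ((commMatrix f).rank) ≤ (e : ℝ) := by
    have h2 : ((commMatrix f).rank : ℝ) ≤ (2 : ℝ) ^ e := by
      calc ((commMatrix f).rank : ℝ) ≤ ((2 ^ e : ℕ) : ℝ) := by exact_mod_cast hrank_le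
        _ = (2 : ℝ) ^ e := by push_cast; ring
    have hposR : (0 : ℝ) < ((commMatrix f).rank : ℝ) := by exact_mod_cast hrpos
    calc Real.logb 2 ((commMatrix f).rank) ≤ Real.logb 2 ((2 : ℝ) ^ e) :=
          Real.logb_le_logb_of_le (by norm_num) hposR h2
      _ = e := by
          rw [Real.logb_pow, Real.logb_self_eq_one (by norm_num), mul_one]
  linarith
end

section
/- If R = A × B is a 0-monochromatic rectangle in the matrix of the inner product function IP over GF(2)ⁿ (i.e., ⟨a,b⟩ = 0 for all a ∈ A, b ∈ B), then |R| = |A|·|B| ≤ 2ⁿ. -/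
/-!
The span `W` of `A` is orthogonal to `B` for the dot product, so `B` lies in the orthogonal
complement of `W`, whose dimension is `n - dim W` because the dot product is nondegenerate.
A subset of a `d`-dimensional subspace over `GF(2)` has at most `2 ^ d` elements, hence
`|A| · |B| ≤ 2 ^ dim W · 2 ^ (n - dim W) = 2 ^ n`.
-/

open Finset Matrix Module

section

variable {K V ι : Type*} [Field K] [Finite K]

lemma Finset.card_le_natCard_pow_finrank [AddCommGroup V] [Module K V] {W : Submodule K V}
    [FiniteDimensional K W] {A : Finset V} (hA : (A : Set V) ⊆ W) :
    #A ≤ Nat.card K ^ finrank K W := by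
  have : Finite W := Module.finite_of_finite K
  rw [← natCard_eq_pow_finrank, ← Set.ncard_coe_finset, ← Nat.card_coe_set_eq]
  exact Set.ncard_le_ncard hA (Set.toFinite _)

variable [Fintype ι] [DecidableEq ι]

omit [Finite K] in
lemma toBilin'_one_apply (v w : ι → K) : toBilin' (1 : Matrix ι ι K) v w = v ⬝ᵥ w := by
  rw [toBilin'_apply', one_mulVec]

theorem card_mul_card_le_of_dotProduct_eq_zero {A B : Finset (ι → K)}
    (h : ∀ a ∈ A, ∀ b ∈ B, a ⬝ᵥ b = 0) :
    #A * #B ≤ Nat.card K ^ Fintype.card ι := by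
  set W := Submodule.span K (A : Set (ι → K))
  have hB : (B : Set (ι → K)) ⊆ (toBilin' 1).orthogonal W := fun b hb ↦
    show W ≤ LinearMap.ker ((toBilin' 1).flip b) from
      Submodule.span_le.mpr fun a ha ↦ by simpa [toBilin'_one_apply] using h a ha b hb
  have hdim : finrank K ((toBilin' 1).orthogonal W) = Fintype.card ι - finrank K W := by
    rw [LinearMap.BilinForm.finrank_orthogonal
      (LinearMap.BilinForm.nondegenerate_toBilin'_of_det_ne_zero' 1 (by simp)),
      finrank_fintype_fun_eq_card]
  calc #A * #B ≤ Nat.card K ^ finrank K W * Nat.card K ^ (Fintype.card ι - finrank K W) :=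
        Nat.mul_le_mul (card_le_natCard_pow_finrank Submodule.subset_span)
          (hdim ▸ card_le_natCard_pow_finrank hB)
    _ = Nat.card K ^ Fintype.card ι := by
        rw [← pow_add, Nat.add_sub_cancel' (by simpa using W.finrank_le)]

end

/-- A 0-monochromatic rectangle for the inner product over `GF(2)ⁿ` has size at most `2ⁿ`. -/
theorem zero_rectangle_IP_bound (n : ℕ)
    (A B : Finset (Fin n → ZMod 2))
    (h : ∀ a ∈ A, ∀ b ∈ B, ∑ i, a i * b i = 0) :
    A.card * B.card ≤ 2 ^ n := by
  simpa using card_mul_card_le_of_dotProduct_eq_zero h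
end

section
/- If R = A × B is a 1-monochromatic rectangle for the inner product function over GF(2)ⁿ (i.e., ⟨a,b⟩ = 1 for all a ∈ A, b ∈ B), then |A|·|B| ≤ 2^{n−1}. -/
/-!
Fix `a₀ ∈ A` and `b₀ ∈ B`. Each `⟨·, b⟩` is constant on `A`, so it kills the direction `U` of `A`;
in the same way `U` and `a₀` are orthogonal to the direction `W` of `B`. Since `⟨a₀, b₀⟩ = 1`,
`a₀ ∉ U`, so nondegeneracy gives `dim U + 1 + dim W ≤ n`. Translation embeds `A` into `U` and
`B` into `W`, hence `|A| |B| ≤ 2 ^ (dim U + dim W) ≤ 2 ^ (n - 1)`.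
-/

open Module Submodule

section Field

variable {K V : Type*} [Field K] [AddCommGroup V] [Module K V]

lemma vectorSpan_le_ker_of_forall_eq {M : Type*} [AddCommGroup M] [Module K M]
    (f : V →ₗ[K] M) {s : Set V} {c : M} (hf : ∀ x ∈ s, f x = c) :
    vectorSpan K s ≤ LinearMap.ker f := by
  rw [vectorSpan_def, span_le]
  rintro _ ⟨x, hx, y, hy, rfl⟩
  simp [hf x hx, hf y hy]

lemma Finset.card_le_natCard_vectorSpan [Finite K] (A : Finset V) :
    A.card ≤ Nat.card K ^ finrank K (vectorSpan K (A : Set V)) := by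
  rcases A.eq_empty_or_nonempty with rfl | ⟨a₀, ha₀⟩
  · simp
  have := finiteDimensional_vectorSpan_of_finite K A.finite_toSet
  have := Module.finite_of_finite K (M := vectorSpan K (A : Set V))
  rw [← Module.natCard_eq_pow_finrank]
  let f : A → vectorSpan K (A : Set V) := fun a => ⟨a - a₀, vsub_mem_vectorSpan K a.2 ha₀⟩
  have hf : Function.Injective f := fun a b hab =>
    Subtype.ext (sub_left_injective (congrArg Subtype.val hab))
  simpa using Nat.card_le_card_of_injective f hf

lemma LinearMap.BilinForm.finrank_add_finrank_le_of_le_orthogonal [FiniteDimensional K V]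
    {β : LinearMap.BilinForm K V} (hβ : β.Nondegenerate) {U W : Submodule K V}
    (hUW : W ≤ β.orthogonal U) : finrank K U + finrank K W ≤ finrank K V := by
  have := finrank_mono hUW
  rw [finrank_orthogonal hβ] at this
  have := U.finrank_le
  omega

theorem LinearMap.BilinForm.card_mul_card_le_of_forall_apply_eq_one [Finite K]
    [FiniteDimensional K V] {β : LinearMap.BilinForm K V} (hβ : β.Nondegenerate)
    {A B : Finset V} (h : ∀ a ∈ A, ∀ b ∈ B, β a b = 1) :
    A.card * B.card ≤ Nat.card K ^ (finrank K V - 1) := by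
  rcases A.eq_empty_or_nonempty with rfl | ⟨a₀, ha₀⟩
  · simp
  rcases B.eq_empty_or_nonempty with rfl | ⟨b₀, hb₀⟩
  · simp
  set U := vectorSpan K (A : Set V)
  set W := vectorSpan K (B : Set V)
  have hU : ∀ b ∈ B, U ≤ LinearMap.ker (β.flip b) :=
    fun b hb => vectorSpan_le_ker_of_forall_eq _ fun a ha => h a ha b hb
  have hUW : ∀ u ∈ U, W ≤ LinearMap.ker (β u) :=
    fun u hu => vectorSpan_le_ker_of_forall_eq _ fun b hb => hU b hb hu
  have ha₀W : W ≤ LinearMap.ker (β a₀) :=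
    vectorSpan_le_ker_of_forall_eq _ fun b hb => h a₀ ha₀ b hb
  have ha₀U : a₀ ∉ U := fun hmem => by
    simpa [h a₀ ha₀ b₀ hb₀] using hU b₀ hb₀ hmem
  have horth : W ≤ β.orthogonal (U ⊔ span K {a₀}) := by
    intro w hw
    suffices U ⊔ span K {a₀} ≤ LinearMap.ker (β.flip w) from fun u hu => this hu
    refine sup_le (fun u hu => hUW u hu hw) ?_
    rw [span_le, Set.singleton_subset_iff]
    exact ha₀W hw
  have hdim := finrank_add_finrank_le_of_le_orthogonal hβ horth
  rw [finrank_sup_span_singleton ha₀U] at hdim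
  calc A.card * B.card ≤ Nat.card K ^ finrank K U * Nat.card K ^ finrank K W :=
        Nat.mul_le_mul A.card_le_natCard_vectorSpan B.card_le_natCard_vectorSpan
    _ = Nat.card K ^ (finrank K U + finrank K W) := (pow_add _ _ _).symm
    _ ≤ Nat.card K ^ (finrank K V - 1) := Nat.pow_le_pow_right Nat.card_pos (by omega)

end Field

lemma dotProductBilin_nondegenerate (R n : Type*) [CommRing R] [Fintype n] :
    (dotProductBilin R R : LinearMap.BilinForm R (n → R)).Nondegenerate :=
  ⟨fun x hx => dotProduct_eq_zero x hx,
    fun y hy => dotProduct_eq_zero y fun x => (dotProduct_comm y x).trans (hy x)⟩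

/-- A 1-monochromatic rectangle for the inner product over `GF(2)ⁿ` has size at most `2^{n−1}`. -/
theorem one_rectangle_IP_bound (n : ℕ)
    (A B : Finset (Fin n → ZMod 2))
    (h : ∀ a ∈ A, ∀ b ∈ B, ∑ i, a i * b i = 1) :
    A.card * B.card ≤ 2 ^ (n - 1) := by
  simpa using LinearMap.BilinForm.card_mul_card_le_of_forall_apply_eq_one
    (dotProductBilin_nondegenerate (ZMod 2) (Fin n)) (A := A) (B := B) h
end

section
/- For the inner product function IP on n-bit strings, the number of 0-entries of M_IP is 2^{2n−1} + 2^{n−1} and the number of 1-entries is 2^{2n−1} − 2^{n−1}; combined with the bound that every 0-rectangle has size at most 2ⁿ, this yields C₀ᴰ(IP) > 2^{n−1}. -/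
/-- The inner product function: `IP x y = ⟨x,y⟩ mod 2`. -/
def IP {n : ℕ} (x y : Fin n → Bool) : Bool :=
  decide ((Finset.univ.filter fun i => x i = true ∧ y i = true).card % 2 = 1)

/-!
Both counts follow from the character sum `∑_{x,y} (-1)^{IP x y} = 2ⁿ`, which factors over the
coordinates, together with `#zeros + #ones = 4ⁿ`. For the rectangle bound, read `x, y` as vectors
over `𝔽₂`: if `I × J` is a 0-rectangle then `J` lies in the annihilator of the span `W` of `I`,
so `|I| |J| ≤ |W| |W⁰| = 2ⁿ`. A partition into monochromatic rectangles covers the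
`2^{2n-1} + 2^{n-1}` zeros by 0-rectangles of size at most `2ⁿ` each, so there are more than
`2^{n-1}` of them.
-/

open Finset

theorem Finset.card_le_natCard_of_subset {α : Type*} [Finite α] {S : Finset α} {s : Set α}
    (h : (S : Set α) ⊆ s) : #S ≤ Nat.card s := by
  rw [Nat.card_coe_set_eq, ← Set.ncard_coe_finset]
  exact Set.ncard_le_ncard h

theorem card_mul_card_le_of_forall_dual_apply_eq_zero {K V : Type*} [Field K] [Finite K]
    [AddCommGroup V] [Module K V] [FiniteDimensional K V]
    (S : Finset V) (T : Finset (Module.Dual K V)) (h : ∀ x ∈ S, ∀ f ∈ T, f x = 0) :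
    #S * #T ≤ Nat.card V := by
  have : Finite V := Module.finite_of_finite K
  have : Finite (Module.Dual K V) := Module.finite_of_finite K
  set W := Submodule.span K (S : Set V)
  have hS : #S ≤ Nat.card W := card_le_natCard_of_subset Submodule.subset_span
  have hT : #T ≤ Nat.card W.dualAnnihilator :=
    card_le_natCard_of_subset fun f hf => (Submodule.mem_dualAnnihilator f).mpr
      fun _ hw => Submodule.span_le (p := LinearMap.ker f) |>.mpr (fun x hx => h x hx f hf) hw
  calc #S * #T ≤ Nat.card W * Nat.card W.dualAnnihilator := Nat.mul_le_mul hS hT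
    _ = Nat.card V := by
      rw [Module.natCard_eq_pow_finrank (K := K) (V := W),
        Module.natCard_eq_pow_finrank (K := K) (V := W.dualAnnihilator), ← pow_add,
        Subspace.finrank_add_finrank_dualAnnihilator_eq, ← Module.natCard_eq_pow_finrank]

theorem card_mul_card_le_of_forall_dotProduct_eq_zero {K ι : Type*} [Field K] [Finite K]
    [Fintype ι] (S T : Finset (ι → K)) (h : ∀ x ∈ S, ∀ y ∈ T, x ⬝ᵥ y = 0) :
    #S * #T ≤ Nat.card K ^ Fintype.card ι := by
  classical
  rw [← card_map (s := T) (dotProductEquiv K ι).toEquiv.toEmbedding,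
    ← Nat.card_eq_fintype_card, ← Nat.card_fun]
  refine card_mul_card_le_of_forall_dual_apply_eq_zero S _ fun x hx f hf => ?_
  obtain ⟨y, hy, rfl⟩ := mem_map.mp hf
  simpa [dotProduct_comm] using h x hx y hy

theorem Fintype.sum_prod_eq_pow_card {ι β γ R : Type*} [Fintype ι] [DecidableEq ι] [Fintype β]
    [Fintype γ] [CommSemiring R] (g : β → γ → R) :
    ∑ p : (ι → β) × (ι → γ), ∏ i, g (p.1 i) (p.2 i) =
      (∑ a, ∑ b, g a b) ^ Fintype.card ι := by
  rw [← Fintype.sum_prod_type', ← Finset.card_univ, ← Finset.prod_const, Fintype.prod_sum,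
    ← (Equiv.arrowProdEquivProdArrow ι (fun _ => β) (fun _ => γ)).sum_comp]
  rfl

theorem Fintype.card_filter_eq_false_sub_card_filter_eq_true {α : Type*} [Fintype α]
    (f : α → Bool) :
    (#{a | f a = false} : ℤ) - #{a | f a = true} = ∑ a, (-1 : ℤ) ^ (f a).toNat := by
  rw [card_filter, card_filter]
  push_cast
  rw [← sum_sub_distrib]
  exact Fintype.sum_congr _ _ fun a => by cases f a <;> rfl

theorem Finset.filter_subset_biUnion_of_monochromatic {α β ι : Type*} [DecidableEq α]
    {f : α → β} {R : ι → Finset α} (hmono : ∀ i, ∀ p ∈ R i, ∀ q ∈ R i, f p = f q)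
    (hcover : ∀ p, ∃ i, p ∈ R i) (s : Finset α) (b : β) [DecidablePred (f · = b)]
    {S : Finset ι} (hS : ∀ i, (R i).Nonempty → (∀ p ∈ R i, f p = b) → i ∈ S) :
    {p ∈ s | f p = b} ⊆ S.biUnion R := by
  intro p hp
  obtain ⟨i, hi⟩ := hcover p
  refine mem_biUnion.mpr ⟨i, hS i ⟨p, hi⟩ fun q hq => ?_, hi⟩
  exact (hmono i q hq p hi).trans (mem_filter.mp hp).2

theorem IP_toNat {n : ℕ} (x y : Fin n → Bool) :
    (IP x y).toNat = (∑ i, (x i && y i).toNat) % 2 := by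
  have hcard : #{i | x i = true ∧ y i = true} = ∑ i, (x i && y i).toNat := by
    rw [card_filter]
    exact sum_congr rfl fun i _ => by cases x i <;> cases y i <;> rfl
  rw [IP, hcard]
  rcases Nat.mod_two_eq_zero_or_one (∑ i, (x i && y i).toNat) with h | h <;> simp [h]

theorem neg_one_pow_IP {n : ℕ} (x y : Fin n → Bool) :
    (-1 : ℤ) ^ (IP x y).toNat = ∏ i, (-1) ^ (x i && y i).toNat := by
  rw [IP_toNat, ← neg_one_pow_eq_pow_mod_two, prod_pow_eq_pow_sum]

-- Each coordinate contributes `∑_{a,b : Bool} (-1)^{a && b} = 1 + 1 + 1 - 1 = 2`.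
theorem sum_neg_one_pow_IP (n : ℕ) :
    ∑ p : (Fin n → Bool) × (Fin n → Bool), (-1 : ℤ) ^ (IP p.1 p.2).toNat = 2 ^ n := by
  simp only [neg_one_pow_IP]
  rw [Fintype.sum_prod_eq_pow_card fun a b => (-1 : ℤ) ^ (a && b).toNat]
  simp

theorem IP_card_zeros_add_card_ones (n : ℕ) :
    #{p : (Fin n → Bool) × (Fin n → Bool) | IP p.1 p.2 = false} +
      #{p : (Fin n → Bool) × (Fin n → Bool) | IP p.1 p.2 = true} = 2 ^ (2 * n) := by
  rw [← card_union_of_disjoint (disjoint_filter.mpr fun _ _ h => by simp [h]), ← filter_or]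
  simp [two_mul, pow_add]

theorem IP_card_zeros_eq_card_ones_add (n : ℕ) :
    #{p : (Fin n → Bool) × (Fin n → Bool) | IP p.1 p.2 = false} =
      #{p : (Fin n → Bool) × (Fin n → Bool) | IP p.1 p.2 = true} + 2 ^ n := by
  have := Fintype.card_filter_eq_false_sub_card_filter_eq_true fun p :
    (Fin n → Bool) × (Fin n → Bool) => IP p.1 p.2
  rw [sum_neg_one_pow_IP] at this
  zify
  linarith

theorem IP_card_zeros {n : ℕ} (hn : 1 ≤ n) :
    #{p : (Fin n → Bool) × (Fin n → Bool) | IP p.1 p.2 = false} =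
      2 ^ (2 * n - 1) + 2 ^ (n - 1) := by
  have hsum := IP_card_zeros_add_card_ones n
  have hdiff := IP_card_zeros_eq_card_ones_add n
  have h2n : 2 ^ (2 * n - 1) * 2 = 2 ^ (2 * n) := pow_sub_one_mul (by omega) 2
  have hn2 : 2 ^ (n - 1) * 2 = 2 ^ n := pow_sub_one_mul (by omega) 2
  omega

theorem IP_card_ones {n : ℕ} (hn : 1 ≤ n) :
    #{p : (Fin n → Bool) × (Fin n → Bool) | IP p.1 p.2 = true} =
      2 ^ (2 * n - 1) - 2 ^ (n - 1) := by
  have hsum := IP_card_zeros_add_card_ones n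
  have h2n : 2 ^ (2 * n - 1) * 2 = 2 ^ (2 * n) := pow_sub_one_mul (by omega) 2
  rw [IP_card_zeros hn] at hsum
  omega

def bitsToZMod {ι : Type*} (x : ι → Bool) : ι → ZMod 2 := fun i => (x i).toNat

theorem bitsToZMod_injective {ι : Type*} : Function.Injective (bitsToZMod (ι := ι)) :=
  Function.Injective.comp_left (g := fun b : Bool => (b.toNat : ZMod 2)) (by decide)

theorem IP_eq_false_iff {n : ℕ} (x y : Fin n → Bool) :
    IP x y = false ↔ bitsToZMod x ⬝ᵥ bitsToZMod y = 0 := by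
  have hcast : ((IP x y).toNat : ZMod 2) = bitsToZMod x ⬝ᵥ bitsToZMod y := by
    rw [IP_toNat, ZMod.natCast_mod, Nat.cast_sum]
    exact Fintype.sum_congr _ _ fun i => by
      simp only [bitsToZMod]; cases x i <;> cases y i <;> rfl
  rw [← hcast]
  cases IP x y <;> decide

theorem IP_zero_rectangle_card_le {n : ℕ} {I J : Finset (Fin n → Bool)}
    (h : ∀ x ∈ I, ∀ y ∈ J, IP x y = false) : #I * #J ≤ 2 ^ n := by
  have := card_mul_card_le_of_forall_dotProduct_eq_zero (I.map ⟨_, bitsToZMod_injective⟩)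
    (J.map ⟨_, bitsToZMod_injective⟩) fun x hx y hy => by
      obtain ⟨a, ha, rfl⟩ := mem_map.mp hx
      obtain ⟨b, hb, rfl⟩ := mem_map.mp hy
      exact (IP_eq_false_iff a b).mp (h a ha b hb)
  simpa using this

/-- The matrix of `IP` has `2^{2n−1} + 2^{n−1}` zero entries and `2^{2n−1} − 2^{n−1}` one
entries; combined with the bound `2ⁿ` on the size of 0-rectangles, any partition of the
matrix into monochromatic rectangles contains more than `2^{n−1}` (nonempty)
0-rectangles, i.e. `C₀ᴰ(IP) > 2^{n−1}`. -/
theorem IP_zero_rectangles_bound (n : ℕ) (hn : 1 ≤ n) :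
    ((Finset.univ : Finset ((Fin n → Bool) × (Fin n → Bool))).filter
        (fun p => IP p.1 p.2 = false)).card = 2 ^ (2 * n - 1) + 2 ^ (n - 1) ∧
    ((Finset.univ : Finset ((Fin n → Bool) × (Fin n → Bool))).filter
        (fun p => IP p.1 p.2 = true)).card = 2 ^ (2 * n - 1) - 2 ^ (n - 1) ∧
    ∀ (k : ℕ) (R : Fin k → Finset ((Fin n → Bool) × (Fin n → Bool))),
      (∀ i, ∃ (I J : Finset (Fin n → Bool)), R i = I ×ˢ J) →
      (∀ i, ∀ p ∈ R i, ∀ q ∈ R i, IP p.1 p.2 = IP q.1 q.2) →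
      (∀ p, ∃! i, p ∈ R i) →
      2 ^ (n - 1) <
        (Finset.univ.filter fun i : Fin k =>
          (R i).Nonempty ∧ ∀ p ∈ R i, IP p.1 p.2 = false).card := by
  refine ⟨IP_card_zeros hn, IP_card_ones hn, fun k R hrect hmono hpart => ?_⟩
  set S := univ.filter fun i : Fin k => (R i).Nonempty ∧ ∀ p ∈ R i, IP p.1 p.2 = false
  have hsize : ∀ i ∈ S, #(R i) ≤ 2 ^ n := by
    intro i hi
    obtain ⟨I, J, hIJ⟩ := hrect i
    rw [hIJ, card_product]
    exact IP_zero_rectangle_card_le fun x hx y hy =>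
      (mem_filter.mp hi).2.2 (x, y) (hIJ ▸ mk_mem_product hx hy)
  have hcover := filter_subset_biUnion_of_monochromatic hmono (fun p => (hpart p).exists)
    univ false (S := S) fun i hne hzero => mem_filter.mpr ⟨mem_univ i, hne, hzero⟩
  have hcount := (card_le_card hcover).trans (card_biUnion_le_card_mul S R _ hsize)
  rw [IP_card_zeros hn] at hcount
  refine Nat.lt_of_mul_lt_mul_right (a := 2 ^ n) ?_
  calc 2 ^ (n - 1) * 2 ^ n = 2 ^ (2 * n - 1) := by rw [← pow_add]; congr 1; omega
    _ < 2 ^ (2 * n - 1) + 2 ^ (n - 1) := Nat.lt_add_of_pos_right (by positivity)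
    _ ≤ #S * 2 ^ n := hcount
end

section
/- In the fluent communication model, the optimal total time to compute f equals log₂ Cᴾ(f): every protocol tree with L leaves yields a fluent protocol of time log₂ L by assigning at each node with subtree leaf counts a, b the costs log₂((a+b)/a) and log₂((a+b)/b), and conversely any fluent protocol finishing in time log₂ r yields a protocol tree with at most r leaves. -/
/-- A fluent protocol tree: each binary node additionally carries positive reals
`a, b` (with `1/a + 1/b = 1` required by `Valid`), and taking the left (right)
branch costs `log₂ a` (`log₂ b`). -/
inductive FTree (X Y : Type) : Type
  | leaf : Bool → FTree X Y
  | nodeA : (X → Bool) → ℝ → ℝ → FTree X Y → FTree X Y → FTree X Y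
  | nodeB : (Y → Bool) → ℝ → ℝ → FTree X Y → FTree X Y → FTree X Y

namespace FTree
variable {X Y : Type}

def eval : FTree X Y → X → Y → Bool
  | leaf c, _, _ => c
  | nodeA g _ _ l r, x, y => if g x then eval r x y else eval l x y
  | nodeB g _ _ l r, x, y => if g y then eval r x y else eval l x y

/-- Validity: at each node the two costs `a, b` are positive and `1/a + 1/b = 1`. -/
def Valid : FTree X Y → Prop
  | leaf _ => True
  | nodeA _ a b l r => 0 < a ∧ 0 < b ∧ 1 / a + 1 / b = 1 ∧ Valid l ∧ Valid r
  | nodeB _ a b l r => 0 < a ∧ 0 < b ∧ 1 / a + 1 / b = 1 ∧ Valid l ∧ Valid r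

/-- The time of a fluent protocol: maximum over root-leaf paths of the total cost. -/
noncomputable def time : FTree X Y → ℝ
  | leaf _ => 0
  | nodeA _ a b l r => max (Real.logb 2 a + time l) (Real.logb 2 b + time r)
  | nodeB _ a b l r => max (Real.logb 2 a + time l) (Real.logb 2 b + time r)

def Computes (F : FTree X Y) (f : X → Y → Bool) : Prop :=
  ∀ x y, F.eval x y = f x y

/-- Number of leaves of a fluent tree. -/
def leaves : FTree X Y → ℕ
  | leaf _ => 1
  | nodeA _ _ _ l r => leaves l + leaves r
  | nodeB _ _ _ l r => leaves l + leaves r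

end FTree

section Aux
variable {X Y : Type}

/-- Bob announces `g y` by walking a list of candidates. -/
def bobChain [DecidableEq Y] (g : Y → Bool) : List Y → PTree X Y
  | [] => .leaf false
  | y0 :: t => .nodeB (fun y => decide (y = y0)) (bobChain g t) (.leaf (g y0))

lemma bobChain_eval [DecidableEq Y] (g : Y → Bool) (l : List Y) (x : X) (y : Y)
    (hy : y ∈ l) : (bobChain (X := X) g l).eval x y = g y := by
  induction l with
  | nil => simp at hy
  | cons y0 t ih =>
    by_cases h : y = y0
    · subst h; simp [bobChain, PTree.eval]
    · have : y ∈ t := by simpa [h] using hy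
      simp [bobChain, PTree.eval, h, ih this]

/-- Alice identifies her input, then Bob announces the answer. -/
noncomputable def aliceChain [DecidableEq X] [DecidableEq Y] [Fintype Y] (f : X → Y → Bool) :
    List X → PTree X Y
  | [] => .leaf false
  | x0 :: t => .nodeA (fun x => decide (x = x0)) (aliceChain f t)
      (bobChain (f x0) Finset.univ.toList)

lemma aliceChain_eval [DecidableEq X] [DecidableEq Y] [Fintype Y] (f : X → Y → Bool)
    (l : List X) (x : X) (y : Y) (hx : x ∈ l) : (aliceChain f l).eval x y = f x y := by
  induction l with
  | nil => simp at hx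
  | cons x0 t ih =>
    by_cases h : x = x0
    · subst h
      simp [aliceChain, PTree.eval, bobChain_eval (f x) Finset.univ.toList x y (by simp)]
    · have : x ∈ t := by simpa [h] using hx
      simp [aliceChain, PTree.eval, h, ih this]

lemma PTree.leaves_pos (T : PTree X Y) : 0 < T.leaves := by
  induction T with
  | leaf b => simp [PTree.leaves]
  | nodeA g l r ihl ihr => simp only [PTree.leaves]; omega
  | nodeB g l r ihl ihr => simp only [PTree.leaves]; omega

/-- Enrich a protocol tree with the canonical leaf-count weights. -/
noncomputable def enrich : PTree X Y → FTree X Y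
  | .leaf b => .leaf b
  | .nodeA g l r =>
      .nodeA g (((l.leaves : ℝ) + r.leaves) / l.leaves) (((l.leaves : ℝ) + r.leaves) / r.leaves)
        (enrich l) (enrich r)
  | .nodeB g l r =>
      .nodeB g (((l.leaves : ℝ) + r.leaves) / l.leaves) (((l.leaves : ℝ) + r.leaves) / r.leaves)
        (enrich l) (enrich r)

lemma enrich_eval (T : PTree X Y) (x : X) (y : Y) : (enrich T).eval x y = T.eval x y := by
  induction T with
  | leaf b => rfl
  | nodeA g l r ihl ihr => simp [enrich, FTree.eval, PTree.eval, ihl, ihr]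
  | nodeB g l r ihl ihr => simp [enrich, FTree.eval, PTree.eval, ihl, ihr]

lemma weights_valid {l r : PTree X Y} :
    0 < ((l.leaves : ℝ) + r.leaves) / l.leaves ∧
    0 < ((l.leaves : ℝ) + r.leaves) / r.leaves ∧
    1 / (((l.leaves : ℝ) + r.leaves) / l.leaves) +
      1 / (((l.leaves : ℝ) + r.leaves) / r.leaves) = 1 := by
  have hl : (0 : ℝ) < l.leaves := by exact_mod_cast l.leaves_pos
  have hr : (0 : ℝ) < r.leaves := by exact_mod_cast r.leaves_pos
  refine ⟨by positivity, by positivity, ?_⟩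
  rw [one_div_div, one_div_div]
  field_simp

lemma enrich_valid (T : PTree X Y) : (enrich T).Valid := by
  induction T with
  | leaf b => trivial
  | nodeA g l r ihl ihr =>
      exact ⟨weights_valid.1, weights_valid.2.1, weights_valid.2.2, ihl, ihr⟩
  | nodeB g l r ihl ihr =>
      exact ⟨weights_valid.1, weights_valid.2.1, weights_valid.2.2, ihl, ihr⟩

lemma logb_weight {l r : PTree X Y} (left : Bool) :
    Real.logb 2 (((l.leaves : ℝ) + r.leaves) / (if left then l.leaves else r.leaves))
      + Real.logb 2 ((if left then l.leaves else r.leaves : ℕ) : ℝ)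
      = Real.logb 2 ((l.leaves : ℝ) + r.leaves) := by
  have hl : (0 : ℝ) < l.leaves := by exact_mod_cast l.leaves_pos
  have hr : (0 : ℝ) < r.leaves := by exact_mod_cast r.leaves_pos
  cases left <;> simp only [if_true, if_false, Bool.false_eq_true] <;>
    rw [Real.logb_div (by positivity) (by positivity)] <;> ring

lemma enrich_time (T : PTree X Y) : (enrich T).time = Real.logb 2 T.leaves := by
  induction T with
  | leaf b => simp [enrich, FTree.time, PTree.leaves]
  | nodeA g l r ihl ihr =>
      have h1 := logb_weight (l := l) (r := r) true
      have h2 := logb_weight (l := l) (r := r) false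
      simp only [if_true, if_false, Bool.false_eq_true] at h1 h2
      simp only [enrich, FTree.time, ihl, ihr, PTree.leaves, Nat.cast_add, h1, h2, max_self]
  | nodeB g l r ihl ihr =>
      have h1 := logb_weight (l := l) (r := r) true
      have h2 := logb_weight (l := l) (r := r) false
      simp only [if_true, if_false, Bool.false_eq_true] at h1 h2
      simp only [enrich, FTree.time, ihl, ihr, PTree.leaves, Nat.cast_add, h1, h2, max_self]

/-- Forget the weights of a fluent tree. -/
def strip : FTree X Y → PTree X Y
  | .leaf b => .leaf b
  | .nodeA g _ _ l r => .nodeA g (strip l) (strip r)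
  | .nodeB g _ _ l r => .nodeB g (strip l) (strip r)

lemma strip_eval (F : FTree X Y) (x : X) (y : Y) : (strip F).eval x y = F.eval x y := by
  induction F with
  | leaf b => rfl
  | nodeA g a b l r ihl ihr => simp [strip, FTree.eval, PTree.eval, ihl, ihr]
  | nodeB g a b l r ihl ihr => simp [strip, FTree.eval, PTree.eval, ihl, ihr]

lemma strip_leaves (F : FTree X Y) : (strip F).leaves = F.leaves := by
  induction F with
  | leaf b => rfl
  | nodeA g a b l r ihl ihr => simp [strip, FTree.leaves, PTree.leaves, ihl, ihr]
  | nodeB g a b l r ihl ihr => simp [strip, FTree.leaves, PTree.leaves, ihl, ihr]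

lemma FTree.leaves_le (F : FTree X Y) (h : F.Valid) : (F.leaves : ℝ) ≤ (2 : ℝ) ^ F.time := by
  induction F with
  | leaf b => simp [FTree.leaves, FTree.time]
  | nodeA g a b l r ihl ihr =>
      obtain ⟨ha, hb, hab, hvl, hvr⟩ := h
      have hTl : Real.logb 2 a + l.time ≤ (FTree.nodeA g a b l r).time := le_max_left _ _
      have hTr : Real.logb 2 b + r.time ≤ (FTree.nodeA g a b l r).time := le_max_right _ _
      set T := (FTree.nodeA g a b l r).time with hT
      have h1 : a * (l.leaves : ℝ) ≤ (2 : ℝ) ^ T := by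
        calc a * (l.leaves : ℝ) ≤ a * (2 : ℝ) ^ l.time :=
              mul_le_mul_of_nonneg_left (ihl hvl) ha.le
          _ = (2 : ℝ) ^ (Real.logb 2 a + l.time) := by
              rw [Real.rpow_add two_pos, Real.rpow_logb two_pos (by norm_num) ha]
          _ ≤ (2 : ℝ) ^ T := Real.rpow_le_rpow_of_exponent_le one_le_two hTl
      have h2 : b * (r.leaves : ℝ) ≤ (2 : ℝ) ^ T := by
        calc b * (r.leaves : ℝ) ≤ b * (2 : ℝ) ^ r.time :=
              mul_le_mul_of_nonneg_left (ihr hvr) hb.le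
          _ = (2 : ℝ) ^ (Real.logb 2 b + r.time) := by
              rw [Real.rpow_add two_pos, Real.rpow_logb two_pos (by norm_num) hb]
          _ ≤ (2 : ℝ) ^ T := Real.rpow_le_rpow_of_exponent_le one_le_two hTr
      have key : ((l.leaves : ℝ) + r.leaves) ≤ (2 : ℝ) ^ T := by
        have e1 : (l.leaves : ℝ) = (1 / a) * (a * l.leaves) := by field_simp
        have e2 : (r.leaves : ℝ) = (1 / b) * (b * r.leaves) := by field_simp
        calc (l.leaves : ℝ) + r.leaves
            = (1 / a) * (a * l.leaves) + (1 / b) * (b * r.leaves) := by rw [← e1, ← e2]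
          _ ≤ (1 / a) * (2 : ℝ) ^ T + (1 / b) * (2 : ℝ) ^ T := by
              gcongr <;> positivity
          _ = (1 / a + 1 / b) * (2 : ℝ) ^ T := by ring
          _ = (2 : ℝ) ^ T := by rw [hab, one_mul]
      simpa [FTree.leaves] using key
  | nodeB g a b l r ihl ihr =>
      obtain ⟨ha, hb, hab, hvl, hvr⟩ := h
      have hTl : Real.logb 2 a + l.time ≤ (FTree.nodeB g a b l r).time := le_max_left _ _
      have hTr : Real.logb 2 b + r.time ≤ (FTree.nodeB g a b l r).time := le_max_right _ _
      set T := (FTree.nodeB g a b l r).time with hT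
      have h1 : a * (l.leaves : ℝ) ≤ (2 : ℝ) ^ T := by
        calc a * (l.leaves : ℝ) ≤ a * (2 : ℝ) ^ l.time :=
              mul_le_mul_of_nonneg_left (ihl hvl) ha.le
          _ = (2 : ℝ) ^ (Real.logb 2 a + l.time) := by
              rw [Real.rpow_add two_pos, Real.rpow_logb two_pos (by norm_num) ha]
          _ ≤ (2 : ℝ) ^ T := Real.rpow_le_rpow_of_exponent_le one_le_two hTl
      have h2 : b * (r.leaves : ℝ) ≤ (2 : ℝ) ^ T := by
        calc b * (r.leaves : ℝ) ≤ b * (2 : ℝ) ^ r.time :=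
              mul_le_mul_of_nonneg_left (ihr hvr) hb.le
          _ = (2 : ℝ) ^ (Real.logb 2 b + r.time) := by
              rw [Real.rpow_add two_pos, Real.rpow_logb two_pos (by norm_num) hb]
          _ ≤ (2 : ℝ) ^ T := Real.rpow_le_rpow_of_exponent_le one_le_two hTr
      have key : ((l.leaves : ℝ) + r.leaves) ≤ (2 : ℝ) ^ T := by
        have e1 : (l.leaves : ℝ) = (1 / a) * (a * l.leaves) := by field_simp
        have e2 : (r.leaves : ℝ) = (1 / b) * (b * r.leaves) := by field_simp
        calc (l.leaves : ℝ) + r.leaves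
            = (1 / a) * (a * l.leaves) + (1 / b) * (b * r.leaves) := by rw [← e1, ← e2]
          _ ≤ (1 / a) * (2 : ℝ) ^ T + (1 / b) * (2 : ℝ) ^ T := by
              gcongr <;> positivity
          _ = (1 / a + 1 / b) * (2 : ℝ) ^ T := by ring
          _ = (2 : ℝ) ^ T := by rw [hab, one_mul]
      simpa [FTree.leaves] using key

end Aux

/-- The optimal fluent communication time for `f` equals `log₂ Cᴾ(f)`: there is a valid
fluent protocol of time exactly `log₂ Cᴾ(f)`, and every valid fluent protocol computing
`f` takes time at least `log₂ Cᴾ(f)` (equivalently, a fluent protocol of time `log₂ r`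
yields a protocol tree with at most `r` leaves). -/
theorem fluent_time_eq_log_CP {X Y : Type} [Fintype X] [Fintype Y]
    [DecidableEq X] [DecidableEq Y] (f : X → Y → Bool) :
    (∃ F : FTree X Y, F.Valid ∧ F.Computes f ∧ F.time = Real.logb 2 (CP f)) ∧
    (∀ F : FTree X Y, F.Valid → F.Computes f → Real.logb 2 (CP f) ≤ F.time) := by
  have hne : {c | ∃ T : PTree X Y, T.Computes f ∧ T.leaves = c}.Nonempty := by
    refine ⟨(aliceChain f Finset.univ.toList).leaves, aliceChain f Finset.univ.toList, ?_, rfl⟩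
    intro x y
    exact aliceChain_eval f Finset.univ.toList x y (by simp)
  obtain ⟨T, hTc, hTl⟩ : ∃ T : PTree X Y, T.Computes f ∧ T.leaves = CP f := Nat.sInf_mem hne
  have hCPpos : 0 < CP f := hTl ▸ T.leaves_pos
  constructor
  · refine ⟨enrich T, enrich_valid T, ?_, ?_⟩
    · intro x y; rw [enrich_eval]; exact hTc x y
    · rw [enrich_time, hTl]
  · intro F hv hc
    have hmem : F.leaves ∈ {c | ∃ T : PTree X Y, T.Computes f ∧ T.leaves = c} :=
      ⟨strip F, fun x y => (strip_eval F x y).trans (hc x y), strip_leaves F⟩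
    have h1 : CP f ≤ F.leaves := Nat.sInf_le hmem
    have h2 : (CP f : ℝ) ≤ (2 : ℝ) ^ F.time :=
      le_trans (by exact_mod_cast h1) (F.leaves_le hv)
    calc Real.logb 2 (CP f) ≤ Real.logb 2 ((2 : ℝ) ^ F.time) :=
          Real.logb_le_logb_of_le one_lt_two (by exact_mod_cast hCPpos) h2
      _ = F.time := Real.logb_rpow two_pos (by norm_num)
end
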